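/- arXiv:2112.14107 — 6 statements merged into one kernel-verified Lean document; each statement's English description precedes it below -/
import Mathlib

section
/- Lower bounds on diagonal resolvent entries. For any M > 0, ε′ > 0 and D′ > 0, if z ∈ ℂ satisfies |Re z| ≤ M and 0 < |Im z| ≤ 3, then for all sufficiently large N: P( |1/G_{ii}(z)| ≤ 3 N^{ε′} / |Im z| for all i ∈ {1,…,N} ) > 1 − N^{−D′}, and P( |1/G^{(i)}_{jj}(z)| ≤ 3 N^{ε′} / |Im z| for all i ≠ j ) > 1 − N^{−D′}. -/
open MeasureTheory ProbabilityTheory Finset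
open scoped ENNReal

/-- The resolvent `G(z) = (W + λV − z)⁻¹` of the deformed Wigner matrix `W + λ·diag(v)`. -/
noncomputable def deformedResolvent (N : ℕ) (l : ℝ) (W : Matrix (Fin N) (Fin N) ℝ)
    (v : Fin N → ℝ) (z : ℂ) : Matrix (Fin N) (Fin N) ℂ :=
  (((W + l • Matrix.diagonal v).map Complex.ofReal) -
      z • (1 : Matrix (Fin N) (Fin N) ℂ))⁻¹

/-- The resolvent `G^{(i)}(z)` of the minor of `W + λ·diag(v)` with row and column `i` removed. -/
noncomputable def deformedMinorResolvent (N : ℕ) (l : ℝ) (W : Matrix (Fin N) (Fin N) ℝ)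
    (v : Fin N → ℝ) (i : Fin N) (z : ℂ) :
    Matrix {k : Fin N // k ≠ i} {k : Fin N // k ≠ i} ℂ :=
  ((Matrix.of fun k l' : {k : Fin N // k ≠ i} =>
      Complex.ofReal ((W + l • Matrix.diagonal v) k.1 l'.1)) -
    z • (1 : Matrix {k : Fin N // k ≠ i} {k : Fin N // k ≠ i} ℂ))⁻¹

open Matrix Finset in
lemma resolvent_inv_diag_bound' {n : Type*} [Fintype n] [DecidableEq n]
    (H : Matrix n n ℝ) (hH : H.IsSymm) (z : ℂ) (hz : z.im ≠ 0) (i : n) :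
    ‖1 / ((H.map Complex.ofReal - z • 1)⁻¹ i i)‖ ≤
      (∑ k, Complex.normSq ((H.map Complex.ofReal - z • 1) i k)) / |z.im| := by
  set A := H.map Complex.ofReal - z • (1 : Matrix n n ℂ) with hAdef
  have habs : 0 < |z.im| := abs_pos.mpr hz
  have hRnn : 0 ≤ ∑ k, Complex.normSq (A i k) :=
    Finset.sum_nonneg fun k _ => Complex.normSq_nonneg _
  by_cases hdet : IsUnit A.det
  · have hAG : A * A⁻¹ = 1 := Matrix.mul_nonsing_inv A hdet
    have hconj : Aᴴ = A + (z - starRingEnd ℂ z) • 1 := by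
      ext j k
      by_cases hjk : j = k
      · subst hjk
        simp only [Matrix.conjTranspose_apply, hAdef, Matrix.sub_apply, Matrix.add_apply,
          Matrix.smul_apply, Matrix.map_apply, Matrix.one_apply_eq, smul_eq_mul, mul_one,
          star_sub, Complex.star_def, Complex.conj_ofReal]
        ring
      · simp only [Matrix.conjTranspose_apply, hAdef, Matrix.sub_apply, Matrix.add_apply,
          Matrix.smul_apply, Matrix.map_apply, Matrix.one_apply_ne hjk,
          Matrix.one_apply_ne (Ne.symm hjk), smul_eq_mul, mul_zero, sub_zero, add_zero,
          star_sub, star_zero, Complex.star_def, Complex.conj_ofReal]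
        exact congrArg _ (hH.apply j k)
    have hGA' : (A⁻¹)ᴴ * Aᴴ = 1 := by
      rw [← Matrix.conjTranspose_mul, hAG, Matrix.conjTranspose_one]
    have hkeyM : A⁻¹ = (A⁻¹)ᴴ + (z - starRingEnd ℂ z) • ((A⁻¹)ᴴ * A⁻¹) := by
      calc A⁻¹ = ((A⁻¹)ᴴ * Aᴴ) * A⁻¹ := by rw [hGA', one_mul]
        _ = (A⁻¹)ᴴ * (Aᴴ * A⁻¹) := by rw [Matrix.mul_assoc]
        _ = (A⁻¹)ᴴ * ((A + (z - starRingEnd ℂ z) • 1) * A⁻¹) := by rw [← hconj]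
        _ = (A⁻¹)ᴴ * (1 + (z - starRingEnd ℂ z) • A⁻¹) := by
            rw [Matrix.add_mul, hAG, Matrix.smul_mul, Matrix.one_mul]
        _ = (A⁻¹)ᴴ + (z - starRingEnd ℂ z) • ((A⁻¹)ᴴ * A⁻¹) := by
            rw [Matrix.mul_add, Matrix.mul_one, Matrix.mul_smul]
    set S : ℝ := ∑ k, Complex.normSq (A⁻¹ k i) with hSdef
    have hSnn : 0 ≤ S := Finset.sum_nonneg fun k _ => Complex.normSq_nonneg _
    have hentry : A⁻¹ i i = starRingEnd ℂ (A⁻¹ i i) + (z - starRingEnd ℂ z) * (S : ℂ) := by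
      have h0 := congrFun (congrFun hkeyM i) i
      rw [Matrix.add_apply, Matrix.smul_apply, Matrix.conjTranspose_apply, Matrix.mul_apply]
        at h0
      have hsum : ∑ k, ((A⁻¹)ᴴ) i k * A⁻¹ k i = (S : ℂ) := by
        rw [hSdef]
        push_cast
        refine Finset.sum_congr rfl fun k _ => ?_
        rw [Matrix.conjTranspose_apply, Complex.star_def,
          ← Complex.normSq_eq_conj_mul_self]
      rw [hsum] at h0
      simpa only [smul_eq_mul, Complex.star_def] using h0
    have him : (A⁻¹ i i).im = z.im * S := by
      have := congrArg Complex.im hentry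
      simp only [Complex.add_im, Complex.conj_im, Complex.mul_im, Complex.sub_re,
        Complex.sub_im, Complex.conj_re, Complex.ofReal_re, Complex.ofReal_im] at this
      ring_nf at this ⊢
      linarith
    have hone : ∑ k, A i k * A⁻¹ k i = 1 := by
      have h0 := congrFun (congrFun hAG i) i
      rw [Matrix.mul_apply] at h0
      rw [h0, Matrix.one_apply_eq]
    set R : ℝ := ∑ k, Complex.normSq (A i k) with hRdef
    have h1 : (1:ℝ) ≤ ∑ k, ‖A i k‖ * ‖A⁻¹ k i‖ := by
      calc (1:ℝ) = ‖∑ k, A i k * A⁻¹ k i‖ := by rw [hone]; simp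
        _ ≤ ∑ k, ‖A i k * A⁻¹ k i‖ := norm_sum_le _ _
        _ = ∑ k, ‖A i k‖ * ‖A⁻¹ k i‖ := by
            simp [norm_mul]
    have hcs : (∑ k, ‖A i k‖ * ‖A⁻¹ k i‖)^2 ≤ R * S := by
      rw [hRdef, hSdef]
      have := Finset.sum_mul_sq_le_sq_mul_sq Finset.univ
        (fun k => ‖A i k‖) (fun k => ‖A⁻¹ k i‖)
      calc _ ≤ (∑ k, ‖A i k‖^2) * (∑ k, ‖A⁻¹ k i‖^2) := this
        _ = _ := by simp [Complex.sq_norm]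
    have hRS : 1 ≤ R * S := by nlinarith
    have hRpos : 0 < R := by nlinarith
    have habsG : |z.im| * S ≤ ‖A⁻¹ i i‖ := by
      calc |z.im| * S = |z.im * S| := by rw [abs_mul, abs_of_nonneg hSnn]
        _ = |(A⁻¹ i i).im| := by rw [him]
        _ ≤ ‖A⁻¹ i i‖ := Complex.abs_im_le_norm _
    have hSpos : 0 < S := by nlinarith
    have hGpos : 0 < ‖A⁻¹ i i‖ := lt_of_lt_of_le (by positivity) habsG
    have habs1 : ‖1 / A⁻¹ i i‖ = 1 / ‖A⁻¹ i i‖ := by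
      simp [norm_div]
    rw [habs1, div_le_div_iff₀ hGpos habs]
    nlinarith
  · rw [Matrix.nonsing_inv_apply_not_isUnit A hdet]
    simp only [Matrix.zero_apply, div_zero, norm_zero]
    positivity

lemma rowsum_bound' {n : Type*} [Fintype n] [DecidableEq n] (H : Matrix n n ℝ) (z : ℂ)
    (j : n) (b C : ℝ) (hb0 : 0 ≤ b) (hb : ∀ k, k ≠ j → (H j k)^2 ≤ b)
    (hC : Complex.normSq ((H j j : ℂ) - z) ≤ C) :
    ∑ k, Complex.normSq ((H.map Complex.ofReal - z • 1) j k) ≤ (Fintype.card n : ℝ) * b + C := by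
  rw [← Finset.sum_erase_add _ _ (Finset.mem_univ j)]
  have hdiag : (H.map Complex.ofReal - z • 1) j j = (H j j : ℂ) - z := by
    simp [Matrix.sub_apply, Matrix.map_apply, Matrix.smul_apply, Matrix.one_apply_eq]
  have h1 : ∑ k ∈ Finset.univ.erase j, Complex.normSq ((H.map Complex.ofReal - z • 1) j k)
      ≤ (Fintype.card n : ℝ) * b := by
    calc ∑ k ∈ Finset.univ.erase j, Complex.normSq ((H.map Complex.ofReal - z • 1) j k)
        ≤ ∑ _k ∈ Finset.univ.erase j, b := by
          refine Finset.sum_le_sum fun k hk => ?_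
          have hkj : k ≠ j := Finset.ne_of_mem_erase hk
          have he : (H.map Complex.ofReal - z • 1) j k = (H j k : ℂ) := by
            simp [Matrix.sub_apply, Matrix.map_apply, Matrix.smul_apply,
              Matrix.one_apply_ne (Ne.symm hkj)]
          rw [he, Complex.normSq_ofReal, ← sq]
          exact hb k hkj
      _ = ((Finset.univ.erase j).card : ℝ) * b := by rw [Finset.sum_const, nsmul_eq_mul]
      _ ≤ (Fintype.card n : ℝ) * b := by
          refine mul_le_mul_of_nonneg_right ?_ hb0
          exact_mod_cast Finset.card_le_card (Finset.erase_subset _ _) |>.trans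
            (le_of_eq (Finset.card_univ))
  rw [hdiag]
  linarith

open Filter Real in
lemma eventually_good' (a θ ε' Cc θ' : ℝ) (ha : 0 ≤ a) (hθ : 0 < θ) (hε' : 0 < ε') :
    ∃ N₀ : ℕ, ∀ N : ℕ, N > N₀ →
      θ' < N ∧ 1 ≤ (N : ℝ) ∧ (a * Real.log N) ^ θ ≤ Real.sqrt N ∧
        ((a * Real.log N) ^ θ) ^ 2 + Cc ≤ 3 * (N : ℝ) ^ ε' := by
  have key : ∀ s : ℝ, 0 < s → ∀ r : ℝ,
      ∀ᶠ t : ℝ in atTop, (a * Real.log t) ^ r ≤ t ^ s := by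
    intro s hs r
    have h1 : (fun t : ℝ => a ^ r * Real.log t ^ r) =o[atTop] (fun t => t ^ s) :=
      (isLittleO_log_rpow_rpow_atTop r hs).const_mul_left _
    have h2 := h1.bound one_pos
    filter_upwards [h2, eventually_ge_atTop (1 : ℝ)] with t ht ht1
    have hlog : 0 ≤ Real.log t := Real.log_nonneg ht1
    have htpos : (0 : ℝ) < t := lt_of_lt_of_le one_pos ht1
    calc (a * Real.log t) ^ r = a ^ r * Real.log t ^ r := Real.mul_rpow ha hlog
      _ ≤ ‖a ^ r * Real.log t ^ r‖ := le_norm_self _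
      _ ≤ 1 * ‖t ^ s‖ := ht
      _ = t ^ s := by rw [one_mul, Real.norm_eq_abs, abs_of_nonneg (Real.rpow_nonneg htpos.le _)]
  have hA := key ε' hε' (2 * θ)
  have hCc : ∀ᶠ t : ℝ in atTop, Cc ≤ t ^ ε' :=
    (tendsto_rpow_atTop hε').eventually_ge_atTop Cc
  have hB := key (1/2) (by norm_num) θ
  have hall : ∀ᶠ t : ℝ in atTop,
      (a * Real.log t) ^ θ ≤ Real.sqrt t ∧
        ((a * Real.log t) ^ θ) ^ 2 + Cc ≤ 3 * t ^ ε' ∧ 1 ≤ t := by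
    filter_upwards [hA, hCc, hB, eventually_ge_atTop (1 : ℝ)] with t hA hCc hB ht1
    have hlog : 0 ≤ a * Real.log t := mul_nonneg ha (Real.log_nonneg ht1)
    refine ⟨by rw [Real.sqrt_eq_rpow]; exact hB, ?_, ht1⟩
    have hsq : ((a * Real.log t) ^ θ) ^ 2 = (a * Real.log t) ^ (2 * θ) := by
      rw [mul_comm 2 θ, Real.rpow_mul hlog, Real.rpow_two]
    have h0 : (0:ℝ) ≤ t ^ ε' := Real.rpow_nonneg (le_trans zero_le_one ht1) _
    rw [hsq]
    linarith
  have hallN : ∀ᶠ N : ℕ in atTop,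
      (a * Real.log N) ^ θ ≤ Real.sqrt N ∧
        ((a * Real.log N) ^ θ) ^ 2 + Cc ≤ 3 * (N:ℝ) ^ ε' ∧ 1 ≤ (N:ℝ) :=
    tendsto_natCast_atTop_atTop.eventually hall
  have hθ'N : ∀ᶠ N : ℕ in atTop, θ' < (N : ℝ) :=
    tendsto_natCast_atTop_atTop.eventually (eventually_gt_atTop θ')
  obtain ⟨N₀, hN₀⟩ := eventually_atTop.mp (hallN.and hθ'N)
  exact ⟨N₀, fun N hN => ⟨(hN₀ N hN.le).2, (hN₀ N hN.le).1.2.2,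
    (hN₀ N hN.le).1.1, (hN₀ N hN.le).1.2.1⟩⟩

set_option maxHeartbeats 1000000 in
/-- **Lower bounds on diagonal resolvent entries.**
For any `M > 0`, `ε′ > 0` and `D′ > 0`, if `|Re z| ≤ M` and `0 < |Im z| ≤ 3`, then for all
sufficiently large `N`:
`P(|1/G_{ii}(z)| ≤ 3N^{ε′}/|Im z|` for all `i) > 1 − N^{−D′}` and
`P(|1/G^{(i)}_{jj}(z)| ≤ 3N^{ε′}/|Im z|` for all `i ≠ j) > 1 − N^{−D′}`. -/
theorem bound_inv_diagonal_resolvent_entries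
    {Ω : Type*} [MeasurableSpace Ω] (P : Measure Ω) [IsProbabilityMeasure P]
    (θ θ' l : ℝ) (hθ : 1 < θ) (hθ' : 0 < θ') (hl : 0 < l)
    (W : (N : ℕ) → Ω → Matrix (Fin N) (Fin N) ℝ)
    (v : (N : ℕ) → Ω → Fin N → ℝ)
    (hWmeas : ∀ N (i j : Fin N), Measurable fun ω => W N ω i j)
    (hWsymm : ∀ N ω, (W N ω).IsSymm)
    (hWindep : ∀ N, iIndepFun
      (fun (p : {p : Fin N × Fin N // p.1 ≤ p.2}) (ω : Ω) => W N ω p.1.1 p.1.2) P)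
    (hWmean : ∀ N (i j : Fin N), ∫ ω, W N ω i j ∂P = 0)
    (hWvar : ∀ N (i j : Fin N),
      ∫ ω, (W N ω i j) ^ 2 ∂P = (1 + if i = j then 1 else 0) / N)
    (hWtail : ∀ N (i j : Fin N) (x : ℝ), 0 ≤ x →
      P {ω | Real.sqrt N * |W N ω i j| > x} ≤
        ENNReal.ofReal (θ' * Real.exp (-(x ^ (1 / θ)))))
    (hvmeas : ∀ N (i : Fin N), Measurable fun ω => v N ω i)
    (hvmem : ∀ N ω (i : Fin N), v N ω i ∈ Set.Icc (-1 : ℝ) 1)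
    (hviid : ∀ N, iIndepFun (fun (i : Fin N) ω => v N ω i) P)
    (hvident : ∀ N (i j : Fin N),
      IdentDistrib (fun ω => v N ω i) (fun ω => v N ω j) P P)
    (hWV : ∀ N, IndepFun
      (fun ω => fun p : Fin N × Fin N => W N ω p.1 p.2) (fun ω => v N ω) P)
    (M ε' D' : ℝ) (hM : 0 < M) (hε' : 0 < ε') (hD' : 0 < D')
    (z : ℂ) (hzre : |z.re| ≤ M) (hzim0 : 0 < |z.im|) (hzim3 : |z.im| ≤ 3) :
    ∃ N₀ : ℕ, ∀ N > N₀,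
      ENNReal.ofReal (1 - (N : ℝ) ^ (-D')) <
        P {ω | ∀ i : Fin N,
          ‖1 / deformedResolvent N l (W N ω) (v N ω) z i i‖ ≤
            3 * (N : ℝ) ^ ε' / |z.im|} ∧
      ENNReal.ofReal (1 - (N : ℝ) ^ (-D')) <
        P {ω | ∀ (i j : Fin N) (hij : j ≠ i),
          ‖1 / deformedMinorResolvent N l (W N ω) (v N ω) i z ⟨j, hij⟩ ⟨j, hij⟩‖ ≤
            3 * (N : ℝ) ^ ε' / |z.im|} := by
  have hzim : z.im ≠ 0 := fun h => by rw [h] at hzim0; simp at hzim0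
  set Cc : ℝ := (1 + l + M) ^ 2 + 9 with hCc
  obtain ⟨N₀, hN₀⟩ := eventually_good' (D' + 3) θ ε' Cc θ' (by linarith) (by linarith) hε'
  refine ⟨N₀, fun N hN => ?_⟩
  obtain ⟨hθ'N, hN1, hxsqrt, hx2⟩ := hN₀ N hN
  have hNpos : (0 : ℝ) < N := lt_of_lt_of_le zero_lt_one hN1
  set x : ℝ := ((D' + 3) * Real.log N) ^ θ with hxdef
  have hx0 : 0 ≤ x :=
    Real.rpow_nonneg (mul_nonneg (by linarith) (Real.log_nonneg hN1)) _
  -- per-entry tail bound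
  have htail : ∀ i j : Fin N, P {ω | Real.sqrt N * |W N ω i j| > x} ≤
      ENNReal.ofReal (θ' * (N : ℝ) ^ (-(D' + 3))) := by
    intro i j
    have h := hWtail N i j x hx0
    have hxp : x ^ (1 / θ) = (D' + 3) * Real.log N := by
      rw [hxdef, ← Real.rpow_mul (mul_nonneg (by linarith) (Real.log_nonneg hN1)),
        mul_one_div_cancel (by linarith : θ ≠ 0), Real.rpow_one]
    have hexp : Real.exp (-(x ^ (1 / θ))) = (N : ℝ) ^ (-(D' + 3)) := by
      rw [hxp, Real.rpow_def_of_pos hNpos]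
      ring_nf
    rwa [hexp] at h
  -- the good event
  set E : Set Ω := {ω | ∀ i j : Fin N, Real.sqrt N * |W N ω i j| ≤ x} with hEdef
  set c : ℝ := (N : ℝ) * (N : ℝ) * (θ' * (N : ℝ) ^ (-(D' + 3))) with hcdef
  have hc0 : 0 ≤ c := by positivity
  have hPEc : P Eᶜ ≤ ENNReal.ofReal c := by
    have hiUnion : P Eᶜ ≤
        ∑' p : Fin N × Fin N, P {ω | Real.sqrt N * |W N ω p.1 p.2| > x} := by
      refine (measure_mono ?_).trans (measure_iUnion_le _)
      intro ω hω
      simp only [hEdef, Set.mem_compl_iff, Set.mem_setOf_eq] at hω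
      push_neg at hω
      obtain ⟨i, j, hij⟩ := hω
      exact Set.mem_iUnion.mpr ⟨(i, j), hij⟩
    refine hiUnion.trans ?_
    calc ∑' p : Fin N × Fin N, P {ω | Real.sqrt N * |W N ω p.1 p.2| > x}
        ≤ ∑' p : Fin N × Fin N, ENNReal.ofReal (θ' * (N : ℝ) ^ (-(D' + 3))) :=
          ENNReal.tsum_le_tsum fun p => htail p.1 p.2
      _ = ((N * N : ℕ) : ℝ≥0∞) * ENNReal.ofReal (θ' * (N : ℝ) ^ (-(D' + 3))) := by
          rw [tsum_fintype, Finset.sum_const, Finset.card_univ, nsmul_eq_mul]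
          norm_num
      _ = ENNReal.ofReal c := by
          rw [← ENNReal.ofReal_natCast (N * N), ← ENNReal.ofReal_mul (by positivity)]
          congr 1
          rw [hcdef]
          push_cast
          ring
  have hclt : c < (N : ℝ) ^ (-D') := by
    have e1 : c = θ' * (N : ℝ) ^ (-(D' + 1)) := by
      have : (N : ℝ) ^ (-(D' + 1)) = (N : ℝ) ^ (1 + (1 + -(D' + 3))) := by ring_nf
      rw [hcdef, this, Real.rpow_add hNpos, Real.rpow_add hNpos, Real.rpow_one]
      ring
    have e2 : (N : ℝ) ^ (-D') = (N : ℝ) * (N : ℝ) ^ (-(D' + 1)) := by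
      have : (-D') = 1 + -(D' + 1) := by ring
      rw [this, Real.rpow_add hNpos, Real.rpow_one]
    rw [e1, e2]
    exact mul_lt_mul_of_pos_right hθ'N (Real.rpow_pos_of_pos hNpos _)
  have hND1 : (N : ℝ) ^ (-D') ≤ 1 :=
    Real.rpow_le_one_of_one_le_of_nonpos hN1 (by linarith)
  have key : ∀ S : Set Ω, E ⊆ S → ENNReal.ofReal (1 - (N : ℝ) ^ (-D')) < P S := by
    intro S hES
    have h1 : (1 : ℝ≥0∞) ≤ P S + P Eᶜ := by
      rw [← measure_univ (μ := P)]
      refine (measure_mono ?_).trans (measure_union_le S Eᶜ)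
      intro ω _
      by_cases h : ω ∈ E
      · exact Or.inl (hES h)
      · exact Or.inr h
    have h2 : ENNReal.ofReal (1 - c) ≤ P S := by
      rw [ENNReal.ofReal_sub _ hc0, ENNReal.ofReal_one]
      exact le_trans (tsub_le_tsub_left hPEc 1) (tsub_le_iff_right.mpr h1)
    refine lt_of_lt_of_le ?_ h2
    rw [ENNReal.ofReal_lt_ofReal_iff (by linarith)]
    linarith
  -- facts on the good event
  have hsqrtpos : (0 : ℝ) < Real.sqrt N := Real.sqrt_pos.mpr hNpos
  have hW2 : ∀ ω ∈ E, ∀ r s : Fin N, (W N ω r s) ^ 2 ≤ x ^ 2 / (N : ℝ) := by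
    intro ω hω r s
    have h1 : Real.sqrt N * |W N ω r s| ≤ x := hω r s
    have h2 : (Real.sqrt N * |W N ω r s|) ^ 2 ≤ x ^ 2 :=
      pow_le_pow_left₀ (by positivity) h1 2
    rw [mul_pow, Real.sq_sqrt (by positivity : (0:ℝ) ≤ (N:ℝ)), sq_abs] at h2
    exact (le_div_iff₀ hNpos).mpr (by linarith)
  have hWd : ∀ ω ∈ E, ∀ r : Fin N, |W N ω r r| ≤ 1 := by
    intro ω hω r
    have h1 : Real.sqrt N * |W N ω r r| ≤ x := hω r r
    have h2 : Real.sqrt N * |W N ω r r| ≤ Real.sqrt N * 1 := by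
      rw [mul_one]; exact h1.trans hxsqrt
    exact le_of_mul_le_mul_left h2 hsqrtpos
  -- diagonal bound
  have hdiagbound : ∀ ω ∈ E, ∀ r : Fin N,
      Complex.normSq ((((W N ω + l • Matrix.diagonal (v N ω)) r r : ℝ) : ℂ) - z) ≤ Cc := by
    intro ω hω r
    have hHrr : (W N ω + l • Matrix.diagonal (v N ω)) r r = W N ω r r + l * v N ω r := by
      simp [Matrix.add_apply, Matrix.smul_apply, Matrix.diagonal_apply_eq, smul_eq_mul]
    have hexp : Complex.normSq ((((W N ω + l • Matrix.diagonal (v N ω)) r r : ℝ) : ℂ) - z)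
        = ((W N ω + l • Matrix.diagonal (v N ω)) r r - z.re) ^ 2 + z.im ^ 2 := by
      simp only [Complex.normSq_apply, Complex.sub_re, Complex.sub_im, Complex.ofReal_re,
        Complex.ofReal_im]
      ring
    rw [hexp, hHrr]
    obtain ⟨hw1, hw2⟩ := abs_le.mp (hWd ω hω r)
    obtain ⟨hv1, hv2⟩ := hvmem N ω r
    obtain ⟨hre1, hre2⟩ := abs_le.mp hzre
    have hlv1' := mul_le_mul_of_nonneg_left hv1 hl.le
    have hlv2' := mul_le_mul_of_nonneg_left hv2 hl.le
    have hlv1 : -l ≤ l * v N ω r := by linarith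
    have hlv2 : l * v N ω r ≤ l := by linarith
    have hsq : (W N ω r r + l * v N ω r - z.re) ^ 2 ≤ (1 + l + M) ^ 2 := by
      apply sq_le_sq' <;> linarith
    have him2 : z.im ^ 2 ≤ 9 := by
      have h9 : z.im ^ 2 ≤ 3 ^ 2 := by
        rw [← sq_abs]; exact pow_le_pow_left₀ (abs_nonneg _) hzim3 2
      linarith
    rw [hCc]
    linarith
  have hNe : (3:ℝ) * (N:ℝ) ^ ε' / |z.im| = (3 * (N:ℝ) ^ ε') / |z.im| := rfl
  constructor
  · -- full resolvent
    refine key _ ?_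
    intro ω hω i
    set H : Matrix (Fin N) (Fin N) ℝ := W N ω + l • Matrix.diagonal (v N ω) with hHdef
    have hHsym : H.IsSymm := (hWsymm N ω).add ((Matrix.isSymm_diagonal _).smul l)
    have hb : ∀ k : Fin N, k ≠ i → (H i k) ^ 2 ≤ x ^ 2 / (N:ℝ) := by
      intro k hk
      have : H i k = W N ω i k := by
        simp [hHdef, Matrix.add_apply, Matrix.smul_apply,
          Matrix.diagonal_apply_ne _ (Ne.symm hk)]
      rw [this]
      exact hW2 ω hω i k
    have hrow := rowsum_bound' H z i (x ^ 2 / (N:ℝ)) Cc (by positivity) hb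
      (hdiagbound ω hω i)
    have hcard : (Fintype.card (Fin N) : ℝ) * (x ^ 2 / (N:ℝ)) ≤ x ^ 2 := by
      rw [Fintype.card_fin]
      rw [mul_div_assoc']
      rw [mul_comm, mul_div_assoc, div_self hNpos.ne', mul_one]
    have htotal : ∑ k, Complex.normSq ((H.map Complex.ofReal - z • 1) i k)
        ≤ 3 * (N:ℝ) ^ ε' := by linarith
    calc ‖1 / deformedResolvent N l (W N ω) (v N ω) z i i‖
        ≤ (∑ k, Complex.normSq ((H.map Complex.ofReal - z • 1) i k)) / |z.im| :=
          resolvent_inv_diag_bound' H hHsym z hzim i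
      _ ≤ 3 * (N:ℝ) ^ ε' / |z.im| := by
          exact (div_le_div_iff_of_pos_right hzim0).mpr htotal
  · -- minor resolvent
    refine key _ ?_
    intro ω hω i j hij
    set H : Matrix (Fin N) (Fin N) ℝ := W N ω + l • Matrix.diagonal (v N ω) with hHdef
    have hHsym : H.IsSymm := (hWsymm N ω).add ((Matrix.isSymm_diagonal _).smul l)
    set H' : Matrix {k : Fin N // k ≠ i} {k : Fin N // k ≠ i} ℝ :=
      H.submatrix Subtype.val Subtype.val with hH'def
    have hH'sym : H'.IsSymm := hHsym.submatrix _
    set jj : {k : Fin N // k ≠ i} := ⟨j, hij⟩ with hjj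
    have hb : ∀ k : {k : Fin N // k ≠ i}, k ≠ jj → (H' jj k) ^ 2 ≤ x ^ 2 / (N:ℝ) := by
      intro k hk
      have hk1 : j ≠ k.1 := fun h => hk (Subtype.ext h.symm)
      have : H' jj k = W N ω j k.1 := by
        simp [hH'def, hHdef, hjj, Matrix.submatrix_apply, Matrix.add_apply, Matrix.smul_apply,
          Matrix.diagonal_apply_ne _ hk1]
      rw [this]
      exact hW2 ω hω j k.1
    have hdiag' : Complex.normSq ((H' jj jj : ℝ) - z) ≤ Cc := by
      have : H' jj jj = H j j := rfl
      rw [this]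
      exact hdiagbound ω hω j
    have hrow := rowsum_bound' H' z jj (x ^ 2 / (N:ℝ)) Cc (by positivity) hb hdiag'
    have hcard : (Fintype.card {k : Fin N // k ≠ i} : ℝ) * (x ^ 2 / (N:ℝ)) ≤ x ^ 2 := by
      have h1 : (Fintype.card {k : Fin N // k ≠ i} : ℝ) ≤ (N : ℝ) := by
        have := Fintype.card_subtype_le (fun k : Fin N => k ≠ i)
        rw [Fintype.card_fin] at this
        exact_mod_cast this
      calc (Fintype.card {k : Fin N // k ≠ i} : ℝ) * (x ^ 2 / (N:ℝ))
          ≤ (N : ℝ) * (x ^ 2 / (N:ℝ)) :=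
            mul_le_mul_of_nonneg_right h1 (by positivity)
        _ = x ^ 2 := by field_simp
    have htotal : ∑ k, Complex.normSq ((H'.map Complex.ofReal - z • 1) jj k)
        ≤ 3 * (N:ℝ) ^ ε' := by linarith
    calc ‖1 / deformedMinorResolvent N l (W N ω) (v N ω) i z jj jj‖
        ≤ (∑ k, Complex.normSq ((H'.map Complex.ofReal - z • 1) jj k)) / |z.im| :=
          resolvent_inv_diag_bound' H' hH'sym z hzim jj
      _ ≤ 3 * (N:ℝ) ^ ε' / |z.im| := by
          exact (div_le_div_iff_of_pos_right hzim0).mpr htotal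
end

section
/- Self-consistent equation derivative identity (discrete version). Let a₁, …, a_N be real numbers, U ⊆ ℂ \ ℝ an open set, and f : U → ℂ a holomorphic function such that for every z ∈ U and every i one has a_i − z − f(z) ≠ 0 and f(z) = (1/N) Σ_{i=1}^N 1/(a_i − z − f(z)). Then for every z ∈ U: (1 + f′(z)) · (1 − (1/N) Σ_{i=1}^N 1/(a_i − z − f(z))²) = 1. -/
open Finset

/-- **Self-consistent equation derivative identity (discrete version).**
Let `a₁, …, a_N` be real numbers, `U ⊆ ℂ \ ℝ` an open set, and `f : U → ℂ` holomorphic such that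
for every `z ∈ U` and every `i` one has `a_i − z − f(z) ≠ 0` and
`f(z) = (1/N) Σ_i 1/(a_i − z − f(z))`.  Then for every `z ∈ U`:
`(1 + f′(z)) · (1 − (1/N) Σ_i 1/(a_i − z − f(z))²) = 1`. -/
theorem self_consistent_deriv_identity_discrete
    (N : ℕ) (hN : 1 ≤ N) (a : Fin N → ℝ) (U : Set ℂ) (hU : IsOpen U)
    (hUim : ∀ z ∈ U, z.im ≠ 0) (f : ℂ → ℂ) (hf : DifferentiableOn ℂ f U)
    (hne : ∀ z ∈ U, ∀ i, (a i : ℂ) - z - f z ≠ 0)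
    (hsc : ∀ z ∈ U, f z = (1 / N : ℂ) * ∑ i, 1 / ((a i : ℂ) - z - f z)) :
    ∀ z ∈ U,
      (1 + deriv f z) * (1 - (1 / N : ℂ) * ∑ i, 1 / ((a i : ℂ) - z - f z) ^ 2) = 1 := by
  intro z hz
  have hzU : U ∈ nhds z := hU.mem_nhds hz
  have hfa : DifferentiableAt ℂ f z := hf.differentiableAt hzU
  set f' := deriv f z with hf'
  have hfd : HasDerivAt f f' z := hfa.hasDerivAt
  have hinv : ∀ i : Fin N, HasDerivAt (fun w => 1 / ((a i : ℂ) - w - f w))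
      ((1 + f') / ((a i : ℂ) - z - f z) ^ 2) z := by
    intro i
    have hgd : HasDerivAt (fun w => (a i : ℂ) - w - f w) (-1 - f') z := by
      exact (((hasDerivAt_const z ((a i : ℂ))).sub (hasDerivAt_id z)).sub hfd).congr_deriv (by ring)
    have : HasDerivAt (fun w => ((a i : ℂ) - w - f w)⁻¹)
        (-(-1 - f') / ((a i : ℂ) - z - f z) ^ 2) z := hgd.inv (hne z hz i)
    simpa [neg_div, one_div] using this.congr_deriv (by ring)
  have hsum : HasDerivAt (fun w => (1 / N : ℂ) * ∑ i, 1 / ((a i : ℂ) - w - f w))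
      ((1 / N : ℂ) * ∑ i, (1 + f') / ((a i : ℂ) - z - f z) ^ 2) z := by
    exact (HasDerivAt.fun_sum (fun i _ => hinv i)).const_mul _
  have heq : f =ᶠ[nhds z] fun w => (1 / N : ℂ) * ∑ i, 1 / ((a i : ℂ) - w - f w) :=
    Filter.eventuallyEq_of_mem hzU (fun w hw => hsc w hw)
  have hD : f' = (1 / N : ℂ) * ∑ i, (1 + f') / ((a i : ℂ) - z - f z) ^ 2 :=
    hfd.unique (hsum.congr_of_eventuallyEq heq)
  have hS : (∑ i, (1 + f') / ((a i : ℂ) - z - f z) ^ 2)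
      = (1 + f') * ∑ i, 1 / ((a i : ℂ) - z - f z) ^ 2 := by
    rw [mul_sum]; exact Finset.sum_congr rfl (fun i _ => by ring)
  rw [hS] at hD
  linear_combination hD
end

section
/- Conditional expectation of the quadratic form of a minor's resolvent. Let 𝙼 be an N×N real symmetric random matrix such that the entries {𝙼_ij : i ≤ j} are independent, E[𝙼_ij] = 0 and E[𝙼_ij²] = 1/N for i ≠ j. Fix an index i and z ∈ ℂ \ ℝ, and let F_i denote the σ-algebra generated by the entries of the minor 𝙼^{(i)}. Then almost surely E[ Σ_{k,l ≠ i} 𝙼_{ik} (𝚁^{(i)}(z))_{kl} 𝙼_{li} | F_i ] = (1/N) Σ_{k ≠ i} (𝚁^{(i)}(z))_{kk}. -/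
open MeasureTheory ProbabilityTheory Finset

section Aux

variable {n : Type*} [Fintype n] [DecidableEq n]

lemma quad_est (A : Matrix n n ℝ) (hA : A.IsSymm) (z : ℂ) (v : n → ℂ) :
    z.im ^ 2 * (∑ j, ‖v j‖ ^ 2) ^ 2 ≤
      (∑ j, ‖v j‖ ^ 2) *
        (∑ j, ‖(((A.map Complex.ofReal) - z • (1 : Matrix n n ℂ)).mulVec v) j‖ ^ 2) := by
  classical
  set B : Matrix n n ℂ := (A.map Complex.ofReal) - z • (1 : Matrix n n ℂ) with hB
  set t : ℝ := ∑ j, ‖v j‖ ^ 2 with ht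
  set c : ℂ := ∑ j, (starRingEnd ℂ) (v j) * (B.mulVec v) j with hc
  set a : ℂ := ∑ j, (starRingEnd ℂ) (v j) * ((A.map Complex.ofReal).mulVec v) j with ha
  -- a is real
  have ha_real : (starRingEnd ℂ) a = a := by
    rw [ha, map_sum]
    have : ∀ j, (starRingEnd ℂ) ((starRingEnd ℂ) (v j) * ((A.map Complex.ofReal).mulVec v) j)
        = ∑ k, (A j k : ℂ) * (v j * (starRingEnd ℂ) (v k)) := by
      intro j
      simp only [Matrix.mulVec, dotProduct, Matrix.map_apply, map_mul, map_sum,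
        RingHomCompTriple.comp_apply, Complex.conj_ofReal, RingHom.id_apply]
      rw [Finset.mul_sum]
      exact Finset.sum_congr rfl fun k _ => by ring
    rw [Finset.sum_congr rfl fun j _ => this j, Finset.sum_comm]
    refine Finset.sum_congr rfl fun j _ => ?_
    simp only [Matrix.mulVec, dotProduct, Matrix.map_apply, Finset.mul_sum]
    refine Finset.sum_congr rfl fun k _ => ?_
    rw [hA.apply j k]
    ring
  have ha_im : a.im = 0 := by
    have := congrArg Complex.im ha_real
    simp only [Complex.conj_im] at this
    linarith
  -- compute c
  have hc_split : c = a - z * (t : ℂ) := by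
    rw [hc, ha, ht]
    have : ∀ j, (starRingEnd ℂ) (v j) * (B.mulVec v) j
        = (starRingEnd ℂ) (v j) * ((A.map Complex.ofReal).mulVec v) j
          - z * ((‖v j‖ ^ 2 : ℝ) : ℂ) := by
      intro j
      have hBv : B.mulVec v j = ((A.map Complex.ofReal).mulVec v) j - z * v j := by
        simp [hB, Matrix.sub_mulVec, Matrix.smul_mulVec, Matrix.one_mulVec]
      rw [hBv]
      have : ((‖v j‖ ^ 2 : ℝ) : ℂ) = (starRingEnd ℂ) (v j) * v j := by
        rw [mul_comm, Complex.mul_conj']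
        norm_cast
      rw [this]
      ring
    rw [Finset.sum_congr rfl fun j _ => this j, Finset.sum_sub_distrib, ← Finset.mul_sum]
    push_cast
    ring
  have hc_im : c.im = - (z.im * t) := by
    rw [hc_split]
    simp [Complex.sub_im, ha_im, Complex.mul_im]
  -- Cauchy-Schwarz
  have habs : ‖c‖ ≤ ∑ j, ‖v j‖ * ‖(B.mulVec v) j‖ := by
    rw [hc]
    refine (norm_sum_le _ _).trans ?_
    refine Finset.sum_le_sum fun j _ => ?_
    rw [norm_mul, RCLike.norm_conj]
  have hCS : (∑ j, ‖v j‖ * ‖(B.mulVec v) j‖) ^ 2 ≤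
      (∑ j, ‖v j‖ ^ 2) * (∑ j, ‖(B.mulVec v) j‖ ^ 2) :=
    Finset.sum_mul_sq_le_sq_mul_sq _ _ _
  have h1 : (z.im * t) ^ 2 ≤ ‖c‖ ^ 2 := by
    have : |c.im| ≤ ‖c‖ := Complex.abs_im_le_norm c
    calc (z.im * t) ^ 2 = c.im ^ 2 := by rw [hc_im]; ring
    _ = |c.im| ^ 2 := (sq_abs _).symm
    _ ≤ ‖c‖ ^ 2 := by nlinarith [Complex.abs_im_le_norm c, norm_nonneg c, abs_nonneg c.im]
  have h2 : ‖c‖ ^ 2 ≤ t * (∑ j, ‖(B.mulVec v) j‖ ^ 2) := by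
    have hnn : (0:ℝ) ≤ ∑ j, ‖v j‖ * ‖(B.mulVec v) j‖ :=
      Finset.sum_nonneg fun j _ => mul_nonneg (norm_nonneg _) (norm_nonneg _)
    nlinarith [habs, hCS, norm_nonneg c]
  nlinarith [h1, h2]

lemma resolvent_entry_bound (A : Matrix n n ℝ) (hA : A.IsSymm) (z : ℂ) (hz : z.im ≠ 0)
    (k l : n) :
    ‖(((A.map Complex.ofReal) - z • (1 : Matrix n n ℂ))⁻¹) k l‖ ≤ |z.im|⁻¹ := by
  classical
  set B : Matrix n n ℂ := (A.map Complex.ofReal) - z • (1 : Matrix n n ℂ) with hB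
  have him2 : (0:ℝ) < z.im ^ 2 := by positivity
  have hker : ∀ v : n → ℂ, B.mulVec v = 0 → v = 0 := by
    intro v hv
    have h := quad_est A hA z v
    rw [← hB, hv] at h
    have hs0 : (∑ j, ‖(0 : n → ℂ) j‖ ^ 2) = 0 := by simp
    rw [hs0, mul_zero] at h
    have ht0 : (∑ j, ‖v j‖ ^ 2) = 0 := by
      have hnn : (0:ℝ) ≤ ∑ j, ‖v j‖ ^ 2 := Finset.sum_nonneg fun j _ => sq_nonneg _
      by_contra hne
      have hpos : 0 < ∑ j, ‖v j‖ ^ 2 := lt_of_le_of_ne hnn (Ne.symm hne)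
      nlinarith [mul_pos him2 (pow_pos hpos 2)]
    funext j
    have h0 : ‖v j‖ ^ 2 = 0 :=
      (Finset.sum_eq_zero_iff_of_nonneg (fun j _ => sq_nonneg ‖v j‖)).mp ht0 j (Finset.mem_univ j)
    simpa using pow_eq_zero_iff (n := 2) (by norm_num) |>.mp h0
  have hinj : Function.Injective B.mulVec := by
    intro x y hxy
    have h0 : B.mulVec (x - y) = 0 := by
      rw [Matrix.mulVec_sub, hxy, sub_self]
    exact sub_eq_zero.mp (hker _ h0)
  have hunit : IsUnit B.det := Matrix.isUnit_iff_isUnit_det B |>.mp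
    (Matrix.mulVec_injective_iff_isUnit.mp hinj)
  -- the column of the inverse
  set w : n → ℂ := fun j => B⁻¹ j l with hw
  have hcol : B.mulVec w = fun j => (1 : Matrix n n ℂ) j l := by
    funext j
    have := Matrix.mul_nonsing_inv B hunit
    calc B.mulVec w j = (B * B⁻¹) j l := by
          simp [Matrix.mulVec, Matrix.mul_apply, dotProduct, hw]
    _ = (1 : Matrix n n ℂ) j l := by rw [this]
  have hsum1 : (∑ j, ‖B.mulVec w j‖ ^ 2) = 1 := by
    rw [hcol]
    simp [Matrix.one_apply, apply_ite (‖·‖)]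
  have h := quad_est A hA z w
  rw [← hB, hsum1, mul_one] at h
  set t : ℝ := ∑ j, ‖w j‖ ^ 2 with ht
  have htnn : (0:ℝ) ≤ t := Finset.sum_nonneg fun j _ => sq_nonneg _
  have hx : z.im ^ 2 * t ≤ 1 := by
    nlinarith [mul_le_mul_of_nonneg_left h (le_of_lt him2)]
  have hone : z.im ^ 2 * (z.im ^ 2)⁻¹ = 1 := mul_inv_cancel₀ (ne_of_gt him2)
  have hbd : t ≤ (z.im)⁻¹ ^ 2 := by
    rw [inv_pow]
    nlinarith [hx, hone, him2, htnn]
  have hwk : ‖w k‖ ^ 2 ≤ t := Finset.single_le_sum (fun j _ => sq_nonneg ‖w j‖) (Finset.mem_univ k)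
  have : ‖w k‖ ^ 2 ≤ (|z.im|⁻¹) ^ 2 := by
    calc ‖w k‖ ^ 2 ≤ t := hwk
    _ ≤ (z.im)⁻¹ ^ 2 := hbd
    _ = (|z.im|⁻¹) ^ 2 := by rw [inv_pow, inv_pow, sq_abs]
  calc ‖B⁻¹ k l‖ = ‖w k‖ := rfl
  _ = Real.sqrt (‖w k‖ ^ 2) := (Real.sqrt_sq (norm_nonneg _)).symm
  _ ≤ Real.sqrt ((|z.im|⁻¹) ^ 2) := Real.sqrt_le_sqrt this
  _ = |z.im|⁻¹ := Real.sqrt_sq (by positivity)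

noncomputable local instance : MeasurableSpace (Matrix n n ℂ) :=
  (inferInstance : MeasurableSpace (n → n → ℂ))

local instance : BorelSpace (Matrix n n ℂ) :=
  (inferInstance : BorelSpace (n → n → ℂ))

noncomputable def resMap (z : ℂ) (x : n × n → ℝ) : Matrix n n ℂ :=
  (((Matrix.of fun k l : n => x (k, l)).map Complex.ofReal) - z • (1 : Matrix n n ℂ))⁻¹

lemma measurable_resMap_entry (z : ℂ) (k l : n) :
    Measurable fun x : n × n → ℝ => resMap z x k l := by
  have hB : Measurable fun x : n × n → ℝ =>
      (((Matrix.of fun k l : n => x (k, l)).map Complex.ofReal)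
        - z • (1 : Matrix n n ℂ)) := by
    apply measurable_pi_lambda
    intro a
    apply measurable_pi_lambda
    intro b
    have : Measurable fun x : n × n → ℝ => ((x (a, b) : ℝ) : ℂ) :=
      Complex.measurable_ofReal.comp (measurable_pi_apply _)
    exact this.sub measurable_const
  have hdet : Measurable fun x : n × n → ℝ =>
      (((Matrix.of fun k l : n => x (k, l)).map Complex.ofReal)
        - z • (1 : Matrix n n ℂ)).det :=
    ((continuous_id.matrix_det).measurable).comp hB
  have hadj : Measurable fun x : n × n → ℝ =>
      (((Matrix.of fun k l : n => x (k, l)).map Complex.ofReal)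
        - z • (1 : Matrix n n ℂ)).adjugate k l := by
    have h1 : Measurable fun A : Matrix n n ℂ => A.adjugate k l :=
      ((measurable_pi_apply l).comp ((measurable_pi_apply k).comp
        (continuous_id.matrix_adjugate).measurable))
    exact h1.comp hB
  have : (fun x : n × n → ℝ => resMap z x k l)
      = fun x => (((Matrix.of fun k l : n => x (k, l)).map Complex.ofReal)
          - z • (1 : Matrix n n ℂ)).det⁻¹
        * (((Matrix.of fun k l : n => x (k, l)).map Complex.ofReal)
          - z • (1 : Matrix n n ℂ)).adjugate k l := by
    funext x
    rw [resMap, Matrix.inv_def, Matrix.smul_apply, Ring.inverse_eq_inv', smul_eq_mul]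
  rw [this]
  exact (hdet.inv).mul hadj

end Aux

lemma integral_complex_ofReal' {Ω : Type*} [MeasurableSpace Ω] {P : Measure Ω} {f : Ω → ℝ} :
    ∫ ω, ((f ω : ℝ) : ℂ) ∂P = ((∫ ω, f ω ∂P : ℝ) : ℂ) :=
  integral_ofReal (𝕜 := ℂ)

lemma integral_ofReal_mul_indep {Ω : Type*} [MeasurableSpace Ω] (P : Measure Ω)
    [IsProbabilityMeasure P]
    (W : Ω → ℝ) (Y : Ω → ℂ) (hWint : Integrable W P) (hYint : Integrable Y P)
    (hre : Integrable (fun ω => W ω * (Y ω).re) P)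
    (him : Integrable (fun ω => W ω * (Y ω).im) P)
    (h1 : IndepFun W (fun ω => (Y ω).re) P)
    (h2 : IndepFun W (fun ω => (Y ω).im) P) :
    ∫ ω, (W ω : ℂ) * Y ω ∂P = ((∫ ω, W ω ∂P : ℝ) : ℂ) * ∫ ω, Y ω ∂P := by
  have hYre : Integrable (fun ω => (Y ω).re) P := by simpa using hYint.re
  have hYim : Integrable (fun ω => (Y ω).im) P := by simpa using hYint.im
  have key : (fun ω => (W ω : ℂ) * Y ω)
      = fun ω => ((W ω * (Y ω).re : ℝ) : ℂ) + ((W ω * (Y ω).im : ℝ) : ℂ) * Complex.I := by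
    funext ω
    apply Complex.ext <;> simp [Complex.mul_re, Complex.mul_im]
  have e1 : ∫ ω, W ω * (Y ω).re ∂P = (∫ ω, W ω ∂P) * ∫ ω, (Y ω).re ∂P :=
    h1.integral_mul_eq_mul_integral hWint.aestronglyMeasurable hYre.aestronglyMeasurable
  have e2 : ∫ ω, W ω * (Y ω).im ∂P = (∫ ω, W ω ∂P) * ∫ ω, (Y ω).im ∂P :=
    h2.integral_mul_eq_mul_integral hWint.aestronglyMeasurable hYim.aestronglyMeasurable
  have hYdec : ∫ ω, Y ω ∂P = ((∫ ω, (Y ω).re ∂P : ℝ) : ℂ)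
      + ((∫ ω, (Y ω).im ∂P : ℝ) : ℂ) * Complex.I := by
    apply Complex.ext
    · have := integral_re (𝕜 := ℂ) hYint
      simp only [RCLike.re_to_complex] at this
      simp [← this]
    · have := integral_im (𝕜 := ℂ) hYint
      simp only [RCLike.im_to_complex] at this
      simp [← this]
  have hadd := integral_add (μ := P) (f := fun ω => ((W ω * (Y ω).re : ℝ) : ℂ))
    (g := fun ω => ((W ω * (Y ω).im : ℝ) : ℂ) * Complex.I)
    hre.ofReal (him.ofReal.mul_const Complex.I)
  rw [key, hadd, integral_mul_const, integral_complex_ofReal', integral_complex_ofReal',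
    e1, e2, hYdec]
  push_cast
  ring

def pidx {N : ℕ} (i k : Fin N) : {p : Fin N × Fin N // p.1 ≤ p.2} :=
  if h : i ≤ k then ⟨(i, k), h⟩ else ⟨(k, i), le_of_not_ge h⟩

lemma pidx_apply {N : ℕ} (M : Matrix (Fin N) (Fin N) ℝ) (hM : M.IsSymm) (i k : Fin N) :
    M (pidx i k).1.1 (pidx i k).1.2 = M i k := by
  unfold pidx; split_ifs with h
  · rfl
  · exact hM.apply i k

lemma pidx_fst_eq_or {N : ℕ} (i k : Fin N) :
    (pidx i k).1.1 = i ∨ (pidx i k).1.2 = i := by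
  unfold pidx; split_ifs <;> simp

lemma pidx_ne {N : ℕ} {i k l : Fin N} (hk : k ≠ i) (hl : l ≠ i) (hkl : k ≠ l) :
    pidx i k ≠ pidx i l := by
  unfold pidx
  split_ifs
  · intro h; simp only [Subtype.mk.injEq, Prod.mk.injEq] at h; exact hkl h.2
  · intro h; simp only [Subtype.mk.injEq, Prod.mk.injEq] at h; exact hk h.2
  · intro h; simp only [Subtype.mk.injEq, Prod.mk.injEq] at h; exact hk h.1
  · intro h; simp only [Subtype.mk.injEq, Prod.mk.injEq] at h; exact hkl h.1

/-- **Conditional expectation of the quadratic form of a minor's resolvent.**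
Let `𝙼` be an `N×N` real symmetric random matrix with independent upper-triangular entries,
`E[𝙼_ij] = 0` and `E[𝙼_ij²] = 1/N` for `i ≠ j`.  Fix `i` and `z ∈ ℂ \ ℝ`, and let `F_i` be the
σ-algebra generated by the entries of the minor `𝙼^{(i)}`.  Then almost surely
`E[Σ_{k,l ≠ i} 𝙼_{ik} 𝚁^{(i)}_{kl}(z) 𝙼_{li} | F_i] = (1/N) Σ_{k ≠ i} 𝚁^{(i)}_{kk}(z)`. -/
theorem condexp_quadratic_form_minor_resolvent
    {Ω : Type*} [MeasurableSpace Ω] (P : Measure Ω) [IsProbabilityMeasure P]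
    (N : ℕ) (M : Ω → Matrix (Fin N) (Fin N) ℝ)
    (hMeas : ∀ i j : Fin N, Measurable fun ω => M ω i j)
    (hSymm : ∀ ω, (M ω).IsSymm)
    (hIndep : iIndepFun
      (fun (p : {p : Fin N × Fin N // p.1 ≤ p.2}) (ω : Ω) => M ω p.1.1 p.1.2) P)
    (hMean : ∀ i j : Fin N, ∫ ω, M ω i j ∂P = 0)
    (hVar : ∀ i j : Fin N, i ≠ j → ∫ ω, (M ω i j) ^ 2 ∂P = 1 / N)
    (i : Fin N) (z : ℂ) (hz : z.im ≠ 0)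
    -- the resolvent of the minor `𝙼^{(i)}` at `z`
    (Rres : Ω → Matrix {k : Fin N // k ≠ i} {k : Fin N // k ≠ i} ℂ)
    (hRres : ∀ ω, Rres ω =
      (((Matrix.of fun k l : {k : Fin N // k ≠ i} => M ω k.1 l.1).map Complex.ofReal) -
          z • (1 : Matrix {k : Fin N // k ≠ i} {k : Fin N // k ≠ i} ℂ))⁻¹)
    -- the σ-algebra generated by the entries of the minor
    (Fi : MeasurableSpace Ω)
    (hFi : Fi = MeasurableSpace.comap
      (fun ω => fun p : {k : Fin N // k ≠ i} × {k : Fin N // k ≠ i} => M ω p.1.1 p.2.1)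
      inferInstance) :
    P[(fun ω => ∑ k : {k : Fin N // k ≠ i}, ∑ l : {k : Fin N // k ≠ i},
        (M ω i k.1 : ℂ) * Rres ω k l * (M ω l.1 i : ℂ)) | Fi]
      =ᵐ[P] fun ω => (1 / N : ℂ) * ∑ k : {k : Fin N // k ≠ i}, Rres ω k k := by
  classical
  rename_i mΩ _hPP
  letI : MeasurableSpace Ω := mΩ
  have hNpos : 0 < N := i.pos
  set minor : Ω → ({k : Fin N // k ≠ i} × {k : Fin N // k ≠ i} → ℝ) :=
    fun ω => fun p => M ω p.1.1 p.2.1 with hminor_def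
  have hminor_meas : Measurable[mΩ] minor :=
    measurable_pi_lambda _ fun p => hMeas _ _
  have hm : Fi ≤ mΩ := by
    rw [hFi]; exact hminor_meas.comap_le
  -- measurability of resolvent entries
  have hRres' : ∀ ω, Rres ω = resMap z (minor ω) := by
    intro ω; rw [hRres ω]; rfl
  have hRmeasFi : ∀ k l : {k : Fin N // k ≠ i}, Measurable[Fi] fun ω => Rres ω k l := by
    intro k l
    have h1 : Measurable[MeasurableSpace.comap minor inferInstance] minor :=
      Measurable.of_comap_le le_rfl
    have h2 := (measurable_resMap_entry z k l).comp h1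
    rw [hFi]
    convert h2 using 1
    funext ω; rw [hRres' ω]; rfl
  have hRmeas : ∀ k l : {k : Fin N // k ≠ i}, Measurable[mΩ] fun ω => Rres ω k l :=
    fun k l => (hRmeasFi k l).mono hm le_rfl
  -- boundedness of resolvent entries
  have hRbd : ∀ ω (k l : {k : Fin N // k ≠ i}), ‖Rres ω k l‖ ≤ |z.im|⁻¹ := by
    intro ω k l
    have hsymm' : (Matrix.of fun k l : {k : Fin N // k ≠ i} => M ω k.1 l.1).IsSymm := by
      ext a b
      exact (hSymm ω).apply a.1 b.1
    rw [hRres ω]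
    exact resolvent_entry_bound _ hsymm' z hz k l
  -- integrability of the entries
  have hX2int : ∀ k : {k : Fin N // k ≠ i}, Integrable (fun ω => (M ω i k.1) ^ 2) P := by
    intro k
    by_contra h
    have hv := hVar i k.1 (Ne.symm k.2)
    rw [integral_undef h] at hv
    have hne : (1 : ℝ) / N ≠ 0 := by positivity
    exact hne hv.symm
  have hXint : ∀ k : {k : Fin N // k ≠ i}, Integrable (fun ω => M ω i k.1) P := by
    intro k
    refine ((hX2int k).add (integrable_const 1)).mono'
      ((hMeas i k.1).aestronglyMeasurable) (ae_of_all _ fun ω => ?_)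
    simp only [Pi.add_apply, Pi.one_apply, Real.norm_eq_abs]
    nlinarith [sq_nonneg (|M ω i k.1| - 1), abs_nonneg (M ω i k.1), sq_abs (M ω i k.1)]
  have hWint : ∀ k l : {k : Fin N // k ≠ i},
      Integrable (fun ω => M ω i k.1 * M ω i l.1) P := by
    intro k l
    refine (((hX2int k).add (hX2int l)).mono'
      (((hMeas i k.1).mul (hMeas i l.1)).aestronglyMeasurable) (ae_of_all _ fun ω => ?_))
    simp only [Pi.add_apply, Real.norm_eq_abs, abs_mul]
    nlinarith [sq_nonneg (|M ω i k.1| - |M ω i l.1|), sq_abs (M ω i k.1),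
      sq_abs (M ω i l.1), abs_nonneg (M ω i k.1), abs_nonneg (M ω i l.1)]
  -- the second moments
  have he : ∀ k l : {k : Fin N // k ≠ i},
      ∫ ω, M ω i k.1 * M ω i l.1 ∂P = if k = l then (1 / N : ℝ) else 0 := by
    intro k l
    by_cases hkl : k = l
    · subst hkl
      rw [if_pos rfl]
      have hsq : (fun ω => M ω i k.1 * M ω i k.1) = fun ω => (M ω i k.1) ^ 2 := by
        funext ω; ring
      rw [hsq]
      exact hVar i k.1 (Ne.symm k.2)
    · rw [if_neg hkl]
      have hne : pidx i k.1 ≠ pidx i l.1 :=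
        pidx_ne k.2 l.2 (fun h => hkl (Subtype.ext h))
      have hInd := hIndep.indepFun hne
      have hk' : (fun ω => M ω (pidx i k.1).1.1 (pidx i k.1).1.2) = fun ω => M ω i k.1 :=
        funext fun ω => pidx_apply (M ω) (hSymm ω) i k.1
      have hl' : (fun ω => M ω (pidx i l.1).1.1 (pidx i l.1).1.2) = fun ω => M ω i l.1 :=
        funext fun ω => pidx_apply (M ω) (hSymm ω) i l.1
      rw [hk', hl'] at hInd
      have hmul := hInd.integral_mul_eq_mul_integral (hXint k).aestronglyMeasurable
          (hXint l).aestronglyMeasurable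
      have hfg : ((fun ω => M ω i k.1) * fun ω => M ω i l.1)
          = fun ω => M ω i k.1 * M ω i l.1 := rfl
      rw [hfg] at hmul
      rw [hmul, hMean i k.1, hMean i l.1, mul_zero]
  -- independence
  have hIndepWu : ∀ (u : Ω → ℝ), Measurable[Fi] u → ∀ k l : {k : Fin N // k ≠ i},
      IndepFun (fun ω => M ω i k.1 * M ω i l.1) u P := by
    set S : Finset {p : Fin N × Fin N // p.1 ≤ p.2} :=
      Finset.univ.filter (fun p => p.1.1 = i ∨ p.1.2 = i) with hS
    set T : Finset {p : Fin N × Fin N // p.1 ≤ p.2} :=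
      Finset.univ.filter (fun p => ¬(p.1.1 = i ∨ p.1.2 = i)) with hT
    have hST : Disjoint S T := Finset.disjoint_filter_filter_not _ _ _
    have hIndepST := hIndep.indepFun_finset S T hST (fun p => hMeas _ _)
    have hIndepC := (IndepFun_iff_Indep _ _ _).mp hIndepST
    set rT : Ω → ({x // x ∈ T} → ℝ) := fun ω q => M ω q.1.1.1 q.1.1.2 with hrT
    set rS : Ω → ({x // x ∈ S} → ℝ) := fun ω q => M ω q.1.1.1 q.1.1.2 with hrS
    set ψ : ({x // x ∈ T} → ℝ) → ({k : Fin N // k ≠ i} × {k : Fin N // k ≠ i} → ℝ) :=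
      fun x p =>
        if h : p.1.1 ≤ p.2.1 then
          x ⟨⟨(p.1.1, p.2.1), h⟩, Finset.mem_filter.mpr ⟨Finset.mem_univ _, by
            simp only [not_or]; exact ⟨p.1.2, p.2.2⟩⟩⟩
        else
          x ⟨⟨(p.2.1, p.1.1), le_of_not_ge h⟩, Finset.mem_filter.mpr ⟨Finset.mem_univ _, by
            simp only [not_or]; exact ⟨p.2.2, p.1.2⟩⟩⟩ with hψdef
    have hψmeas : Measurable ψ := by
      apply measurable_pi_lambda
      intro p
      rw [hψdef]
      by_cases h : p.1.1 ≤ p.2.1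
      · simp only [dif_pos h]; exact measurable_pi_apply _
      · simp only [dif_neg h]; exact measurable_pi_apply _
    have hfac : minor = ψ ∘ rT := by
      funext ω p
      simp only [hminor_def, hψdef, Function.comp_apply]
      by_cases h : p.1.1 ≤ p.2.1
      · rw [dif_pos h]
      · rw [dif_neg h]
        exact ((hSymm ω).apply p.1.1 p.2.1).symm
    have hFi_le_T : Fi ≤ MeasurableSpace.comap rT inferInstance := by
      rw [hFi, hfac, ← MeasurableSpace.comap_comp]
      exact MeasurableSpace.comap_mono hψmeas.comap_le
    have hXS : ∀ k : {k : Fin N // k ≠ i}, Measurable[MeasurableSpace.comap rS inferInstance]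
        (fun ω => M ω i k.1) := by
      intro k
      have hmem : pidx i k.1 ∈ S :=
        Finset.mem_filter.mpr ⟨Finset.mem_univ _, pidx_fst_eq_or i k.1⟩
      have heq : (fun ω => M ω i k.1)
          = (fun x : {x // x ∈ S} → ℝ => x ⟨pidx i k.1, hmem⟩) ∘ rS :=
        funext fun ω => (pidx_apply (M ω) (hSymm ω) i k.1).symm
      rw [heq]
      exact (measurable_pi_apply _).comp (Measurable.of_comap_le le_rfl)
    intro u hu k l
    have hWle : MeasurableSpace.comap (fun ω => M ω i k.1 * M ω i l.1) inferInstance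
        ≤ MeasurableSpace.comap rS inferInstance :=
      Measurable.comap_le ((hXS k).mul (hXS l))
    have hule : MeasurableSpace.comap u inferInstance
        ≤ MeasurableSpace.comap rT inferInstance :=
      (Measurable.comap_le hu).trans hFi_le_T
    rw [IndepFun_iff_Indep]
    exact indep_of_indep_of_le_right (indep_of_indep_of_le_left hIndepC hWle) hule
  -- integrability of the terms
  have hterm : ∀ (k l : {k : Fin N // k ≠ i}) ω,
      (M ω i k.1 : ℂ) * Rres ω k l * (M ω l.1 i : ℂ)
        = ((M ω i k.1 * M ω i l.1 : ℝ) : ℂ) * Rres ω k l := by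
    intro k l ω
    rw [(hSymm ω).apply i l.1]
    push_cast
    ring
  have hterm_int : ∀ k l : {k : Fin N // k ≠ i},
      Integrable (fun ω => ((M ω i k.1 * M ω i l.1 : ℝ) : ℂ) * Rres ω k l) P := by
    intro k l
    have h1 : Integrable (fun ω => ((M ω i k.1 * M ω i l.1 : ℝ) : ℂ)) P :=
      (hWint k l).ofReal
    have h2 := h1.bdd_mul ((hRmeas k l).aestronglyMeasurable)
      (ae_of_all _ fun ω => hRbd ω k l)
    simpa [mul_comm] using h2
  have hRint : ∀ k l : {k : Fin N // k ≠ i}, Integrable (fun ω => Rres ω k l) P := by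
    intro k l
    exact (integrable_const (|z.im|⁻¹)).mono' ((hRmeas k l).aestronglyMeasurable)
      (ae_of_all _ fun ω => hRbd ω k l)
  have hf_int : Integrable (fun ω => ∑ k : {k : Fin N // k ≠ i}, ∑ l : {k : Fin N // k ≠ i},
      (M ω i k.1 : ℂ) * Rres ω k l * (M ω l.1 i : ℂ)) P := by
    refine integrable_finset_sum _ fun k _ => integrable_finset_sum _ fun l _ => ?_
    exact (hterm_int k l).congr (ae_of_all _ fun ω => (hterm k l ω).symm)
  have hg_int : Integrable (fun ω => (1 / N : ℂ) * ∑ k : {k : Fin N // k ≠ i},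
      Rres ω k k) P :=
    (integrable_finset_sum _ fun k _ => hRint k k).const_mul _
  have hg_meas' : AEStronglyMeasurable[Fi] (fun ω => (1 / N : ℂ)
      * ∑ k : {k : Fin N // k ≠ i}, Rres ω k k) P := by
    have hsum : Measurable[Fi] fun ω => ∑ k : {k : Fin N // k ≠ i}, Rres ω k k :=
      Finset.measurable_sum _ fun k _ => hRmeasFi k k
    have hmul : Measurable[Fi] fun ω => (1 / N : ℂ)
        * ∑ k : {k : Fin N // k ≠ i}, Rres ω k k := hsum.const_mul _
    exact ⟨_, hmul.stronglyMeasurable, Filter.EventuallyEq.rfl⟩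
  -- the set-integral identity
  have hg_eq : ∀ s : Set Ω, MeasurableSet[Fi] s → P s < ⊤ →
      ∫ ω in s, ((1 / N : ℂ) * ∑ k : {k : Fin N // k ≠ i}, Rres ω k k) ∂P
        = ∫ ω in s, (∑ k : {k : Fin N // k ≠ i}, ∑ l : {k : Fin N // k ≠ i},
            (M ω i k.1 : ℂ) * Rres ω k l * (M ω l.1 i : ℂ)) ∂P := by
    intro s hs _
    have hsm0 : MeasurableSet[mΩ] s := hm s hs
    have hgs : ∫ ω in s, ((1 / N : ℂ) * ∑ k : {k : Fin N // k ≠ i}, Rres ω k k) ∂P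
        = (1 / N : ℂ) * ∑ k : {k : Fin N // k ≠ i}, ∫ ω in s, Rres ω k k ∂P := by
      rw [integral_const_mul, integral_finset_sum _ (fun k _ => (hRint k k).integrableOn)]
    have hfs1 : ∫ ω in s, (∑ k : {k : Fin N // k ≠ i}, ∑ l : {k : Fin N // k ≠ i},
          (M ω i k.1 : ℂ) * Rres ω k l * (M ω l.1 i : ℂ)) ∂P
        = ∑ k : {k : Fin N // k ≠ i}, ∑ l : {k : Fin N // k ≠ i},
            ∫ ω in s, (M ω i k.1 : ℂ) * Rres ω k l * (M ω l.1 i : ℂ) ∂P := by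
      have hint : ∀ k l : {k : Fin N // k ≠ i},
          Integrable (fun ω => (M ω i k.1 : ℂ) * Rres ω k l * (M ω l.1 i : ℂ)) P :=
        fun k l => (hterm_int k l).congr (ae_of_all _ fun ω => (hterm k l ω).symm)
      rw [integral_finset_sum _ (fun k _ =>
        (integrable_finset_sum _ fun l _ => hint k l).integrableOn)]
      exact Finset.sum_congr rfl fun k _ =>
        integral_finset_sum _ fun l _ => (hint k l).integrableOn
    have hterm_val : ∀ k l : {k : Fin N // k ≠ i},
        ∫ ω in s, (M ω i k.1 : ℂ) * Rres ω k l * (M ω l.1 i : ℂ) ∂P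
          = (((if k = l then (1 / N : ℝ) else 0) : ℝ) : ℂ) * ∫ ω in s, Rres ω k l ∂P := by
      intro k l
      have h0 : (fun ω => (M ω i k.1 : ℂ) * Rres ω k l * (M ω l.1 i : ℂ))
          = fun ω => ((M ω i k.1 * M ω i l.1 : ℝ) : ℂ) * Rres ω k l :=
        funext fun ω => hterm k l ω
      rw [show ∫ ω in s, (M ω i k.1 : ℂ) * Rres ω k l * (M ω l.1 i : ℂ) ∂P
          = ∫ ω in s, ((M ω i k.1 * M ω i l.1 : ℝ) : ℂ) * Rres ω k l ∂P from by rw [h0]]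
      set Y : Ω → ℂ := s.indicator (fun ω => Rres ω k l) with hY
      have hYmeasFi : Measurable[Fi] Y := (hRmeasFi k l).indicator hs
      have hYmeas : Measurable[mΩ] Y := (hRmeas k l).indicator hsm0
      have hYbd : ∀ ω, ‖Y ω‖ ≤ |z.im|⁻¹ := by
        intro ω
        by_cases hω : ω ∈ s
        · rw [hY, Set.indicator_of_mem hω]; exact hRbd ω k l
        · rw [hY, Set.indicator_of_notMem hω]; simp only [norm_zero]; positivity
      have hYint : Integrable Y P := (integrable_const (|z.im|⁻¹)).mono'
        hYmeas.aestronglyMeasurable (ae_of_all _ hYbd)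
      have h1 : ∫ ω in s, ((M ω i k.1 * M ω i l.1 : ℝ) : ℂ) * Rres ω k l ∂P
          = ∫ ω, ((M ω i k.1 * M ω i l.1 : ℝ) : ℂ) * Y ω ∂P := by
        rw [← integral_indicator hsm0]
        congr 1
        funext ω
        by_cases hω : ω ∈ s
        · rw [Set.indicator_of_mem hω, hY, Set.indicator_of_mem hω]
        · rw [Set.indicator_of_notMem hω, hY, Set.indicator_of_notMem hω, mul_zero]
      have h2 : ∫ ω in s, Rres ω k l ∂P = ∫ ω, Y ω ∂P := by
        rw [← integral_indicator hsm0]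
      have hre_int : Integrable (fun ω => M ω i k.1 * M ω i l.1 * (Y ω).re) P := by
        have hb : ∀ ω, ‖(Y ω).re‖ ≤ |z.im|⁻¹ := fun ω =>
          le_trans (by rw [Real.norm_eq_abs]; exact Complex.abs_re_le_norm (Y ω)) (hYbd ω)
        have := (hWint k l).bdd_mul
          ((Complex.measurable_re.comp hYmeas).aestronglyMeasurable) (ae_of_all _ hb)
        simpa [mul_comm] using this
      have him_int : Integrable (fun ω => M ω i k.1 * M ω i l.1 * (Y ω).im) P := by
        have hb : ∀ ω, ‖(Y ω).im‖ ≤ |z.im|⁻¹ := fun ω =>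
          le_trans (by rw [Real.norm_eq_abs]; exact Complex.abs_im_le_norm (Y ω)) (hYbd ω)
        have := (hWint k l).bdd_mul
          ((Complex.measurable_im.comp hYmeas).aestronglyMeasurable) (ae_of_all _ hb)
        simpa [mul_comm] using this
      have hind1 := hIndepWu (fun ω => (Y ω).re) (Complex.measurable_re.comp hYmeasFi) k l
      have hind2 := hIndepWu (fun ω => (Y ω).im) (Complex.measurable_im.comp hYmeasFi) k l
      rw [h1, h2, integral_ofReal_mul_indep P _ _ (hWint k l) hYint hre_int him_int
        hind1 hind2, he k l]
    rw [hgs, hfs1]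
    have hsum : ∑ k : {k : Fin N // k ≠ i}, ∑ l : {k : Fin N // k ≠ i},
          ∫ ω in s, (M ω i k.1 : ℂ) * Rres ω k l * (M ω l.1 i : ℂ) ∂P
        = ∑ k : {k : Fin N // k ≠ i}, (1 / N : ℂ) * ∫ ω in s, Rres ω k k ∂P := by
      refine Finset.sum_congr rfl fun k _ => ?_
      calc ∑ l : {k : Fin N // k ≠ i},
            ∫ ω in s, (M ω i k.1 : ℂ) * Rres ω k l * (M ω l.1 i : ℂ) ∂P
          = ∑ l : {k : Fin N // k ≠ i},
              (((if k = l then (1 / N : ℝ) else 0) : ℝ) : ℂ) * ∫ ω in s, Rres ω k l ∂P :=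
            Finset.sum_congr rfl fun l _ => hterm_val k l
        _ = (1 / N : ℂ) * ∫ ω in s, Rres ω k k ∂P := by
            rw [Finset.sum_eq_single k]
            · rw [if_pos rfl]; push_cast; ring
            · intro l _ hlk
              rw [if_neg (fun h => hlk h.symm)]
              simp
            · intro hk; exact absurd (Finset.mem_univ k) hk
    rw [hsum, Finset.mul_sum]
  refine (ae_eq_condExp_of_forall_setIntegral_eq hm hf_int (fun s _ _ => ?_) hg_eq hg_meas').symm
  exact hg_int.integrableOn
end

section
/- Existence and uniqueness of the steepest-descent height function. If x ∈ ℝ, y > 0 and Im R(x + iy) = 0, then y < π/(2β). Conversely, for every y ∈ (0, π/(2β)) there exists a unique x ∈ ℝ such that Im R(x + iy) = 0. -/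
open Finset Complex Real

/-- The function `R(z) = 2βz − (1/N) Σ_i log(z − λ_i)`, with `log` the principal branch. -/
noncomputable def Rfun (N : ℕ) (ev : Fin N → ℝ) (β : ℝ) (z : ℂ) : ℂ :=
  2 * (β : ℂ) * z - (1 / N : ℂ) * ∑ i, Complex.log (z - (ev i : ℂ))

lemma arg_aux (x y : ℝ) (hy : 0 < y) :
    Complex.arg (↑x + ↑y * Complex.I) = π / 2 - Real.arctan (x / y) := by
  set z : ℂ := ↑x + ↑y * Complex.I with hz
  have him : z.im = y := by simp [hz]
  have hre : z.re = x := by simp [hz]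
  have hzim : 0 < z.im := by rw [him]; exact hy
  have h1 : 0 < Complex.arg z := by
    rcases (Complex.arg_nonneg_iff.mpr hzim.le).lt_or_eq with h | h
    · exact h
    · exfalso
      have := (Complex.arg_eq_zero_iff.mp h.symm).2
      rw [him] at this; linarith
  have h2 : Complex.arg z < π := by
    rw [Complex.arg_lt_pi_iff]; right; rw [him]; exact hy.ne'
  have htan : Real.tan (π / 2 - Complex.arg z) = x / y := by
    rw [Real.tan_pi_div_two_sub, Complex.tan_arg, him, hre, inv_div]
  have := Real.arctan_eq_of_tan_eq htan ⟨by linarith [Real.pi_pos], by linarith⟩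
  linarith

lemma im_Rfun (N : ℕ) (hN : 0 < N) (ev : Fin N → ℝ) (β : ℝ) (x y : ℝ) (hy : 0 < y) :
    (Rfun N ev β (x + y * Complex.I)).im
      = 2 * β * y - π / 2 + (1 / N) * ∑ i, Real.arctan ((x - ev i) / y) := by
  have hNR : (N : ℝ) ≠ 0 := Nat.cast_ne_zero.mpr hN.ne'
  have harg : ∀ i : Fin N, (Complex.log ((x : ℂ) + (y : ℂ) * Complex.I - (ev i : ℂ))).im
      = π / 2 - Real.arctan ((x - ev i) / y) := by
    intro i
    rw [Complex.log_im]
    have h : (x : ℂ) + (y : ℂ) * Complex.I - (ev i : ℂ)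
        = ((x - ev i : ℝ) : ℂ) + (y : ℂ) * Complex.I := by push_cast; ring
    rw [h, arg_aux _ _ hy]
  have hcast : (1 / (N : ℂ)) = (((1 / (N : ℝ)) : ℝ) : ℂ) := by push_cast; ring
  have h2 : ((1 / (N : ℂ)) * ∑ i, Complex.log ((x : ℂ) + (y : ℂ) * Complex.I - (ev i : ℂ))).im
      = (1 / (N : ℝ)) * ∑ i, (π / 2 - Real.arctan ((x - ev i) / y)) := by
    rw [hcast, Complex.im_ofReal_mul, Complex.im_sum]
    congr 1
    exact Finset.sum_congr rfl fun i _ => harg i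
  have h1 : (2 * (β : ℂ) * ((x : ℂ) + (y : ℂ) * Complex.I)).im = 2 * β * y := by simp
  rw [Rfun, Complex.sub_im, h1, h2, Finset.sum_sub_distrib, Finset.sum_const,
    Finset.card_univ, Fintype.card_fin]
  field_simp
  ring

/-- **Existence and uniqueness of the steepest-descent height function.**
If `x ∈ ℝ`, `y > 0` and `Im R(x + iy) = 0`, then `y < π/(2β)`.  Conversely, for every
`y ∈ (0, π/(2β))` there exists a unique `x ∈ ℝ` such that `Im R(x + iy) = 0`. -/
theorem steepest_descent_height_exists_unique
    (N : ℕ) (hN : 0 < N) (ev : Fin N → ℝ) (hev : Antitone ev) (β : ℝ) (hβ : 0 < β) :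
    (∀ x y : ℝ, 0 < y → (Rfun N ev β (x + y * Complex.I)).im = 0 → y < π / (2 * β)) ∧
    (∀ y : ℝ, y ∈ Set.Ioo 0 (π / (2 * β)) →
      ∃! x : ℝ, (Rfun N ev β (x + y * Complex.I)).im = 0) := by
  have hNR : (0 : ℝ) < (N : ℝ) := by exact_mod_cast hN
  have : Nonempty (Fin N) := Fin.pos_iff_nonempty.mp hN
  constructor
  · intro x y hy him
    rw [im_Rfun N hN ev β x y hy] at him
    have hsum : -((N : ℝ) * (π / 2)) < ∑ i, Real.arctan ((x - ev i) / y) := by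
      have := Finset.sum_lt_sum_of_nonempty (Finset.univ_nonempty (α := Fin N))
        (f := fun _ : Fin N => -(π / 2)) (g := fun i => Real.arctan ((x - ev i) / y))
        (fun i _ => Real.neg_pi_div_two_lt_arctan _)
      simpa [Finset.sum_const, Finset.card_univ, mul_comm] using this
    rw [lt_div_iff₀ (by positivity)]
    have h2 : (1 / (N : ℝ)) * (-((N : ℝ) * (π / 2))) < (1 / (N : ℝ)) *
        ∑ i, Real.arctan ((x - ev i) / y) := by
      exact mul_lt_mul_of_pos_left hsum (by positivity)
    have h3 : (1 / (N : ℝ)) * (-((N : ℝ) * (π / 2))) = -(π / 2) := by field_simp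
    nlinarith
  · rintro y ⟨hy0, hylt⟩
    have hπ : 2 * β * y < π := by
      rw [lt_div_iff₀ (by positivity)] at hylt; nlinarith
    set g : ℝ → ℝ := fun x => 2 * β * y - π / 2 + (1 / N) * ∑ i, Real.arctan ((x - ev i) / y)
      with hgdef
    have hg : ∀ x : ℝ, (Rfun N ev β (x + y * Complex.I)).im = g x :=
      fun x => im_Rfun N hN ev β x y hy0
    have hmono : StrictMono g := by
      intro a b hab
      apply (add_lt_add_iff_left _).mpr
      apply mul_lt_mul_of_pos_left _ (by positivity)
      refine Finset.sum_lt_sum_of_nonempty Finset.univ_nonempty fun i _ => ?_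
      exact Real.arctan_strictMono ((div_lt_div_iff_of_pos_right hy0).mpr (by linarith))
    have hcont : Continuous g := by
      apply continuous_const.add
      exact continuous_const.mul (continuous_finset_sum _ fun i _ =>
        Real.continuous_arctan.comp ((continuous_id.sub continuous_const).div_const y))
    have htop : Filter.Tendsto g Filter.atTop (nhds (2 * β * y)) := by
      have hterm : ∀ i : Fin N, Filter.Tendsto (fun x : ℝ => Real.arctan ((x - ev i) / y))
          Filter.atTop (nhds (π / 2)) := by
        intro i
        have h1 : Filter.Tendsto (fun x : ℝ => (x - ev i) / y) Filter.atTop Filter.atTop := by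
          apply Filter.Tendsto.atTop_div_const hy0
          simpa [sub_eq_add_neg] using Filter.tendsto_atTop_add_const_right Filter.atTop
            (-ev i) Filter.tendsto_id
        exact (tendsto_nhds_of_tendsto_nhdsWithin Real.tendsto_arctan_atTop).comp h1
      have hsum := tendsto_finset_sum Finset.univ fun i (_ : i ∈ Finset.univ) => hterm i
      have := Filter.Tendsto.add (tendsto_const_nhds (x := 2 * β * y - π / 2))
        (Filter.Tendsto.const_mul (1 / (N : ℝ)) hsum)
      have heq : 2 * β * y - π / 2 + (1 / (N : ℝ)) * ∑ _i : Fin N, (π / 2) = 2 * β * y := by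
        rw [Finset.sum_const, Finset.card_univ, Fintype.card_fin]
        field_simp
        rw [nsmul_eq_mul]; ring
      rwa [heq] at this
    have hbot : Filter.Tendsto g Filter.atBot (nhds (2 * β * y - π)) := by
      have hterm : ∀ i : Fin N, Filter.Tendsto (fun x : ℝ => Real.arctan ((x - ev i) / y))
          Filter.atBot (nhds (-(π / 2))) := by
        intro i
        have h1 : Filter.Tendsto (fun x : ℝ => (x - ev i) / y) Filter.atBot Filter.atBot := by
          apply Filter.Tendsto.atBot_div_const hy0
          simpa [sub_eq_add_neg] using Filter.tendsto_atBot_add_const_right Filter.atBot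
            (-ev i) Filter.tendsto_id
        exact (tendsto_nhds_of_tendsto_nhdsWithin Real.tendsto_arctan_atBot).comp h1
      have hsum := tendsto_finset_sum Finset.univ fun i (_ : i ∈ Finset.univ) => hterm i
      have := Filter.Tendsto.add (tendsto_const_nhds (x := 2 * β * y - π / 2))
        (Filter.Tendsto.const_mul (1 / (N : ℝ)) hsum)
      have heq : 2 * β * y - π / 2 + (1 / (N : ℝ)) * ∑ _i : Fin N, (-(π / 2))
          = 2 * β * y - π := by
        rw [Finset.sum_const, Finset.card_univ, Fintype.card_fin]
        field_simp
        ring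
      rwa [heq] at this
    obtain ⟨a, ha⟩ : ∃ a, g a < 0 :=
      (hbot.eventually_lt_const (show 2 * β * y - π < 0 by linarith)).exists
    obtain ⟨b, hb⟩ : ∃ b, 0 < g b :=
      (htop.eventually_const_lt (show (0 : ℝ) < 2 * β * y by positivity)).exists
    have hab : a < b := hmono.lt_iff_lt.mp (ha.trans hb)
    obtain ⟨x, _, hx⟩ := intermediate_value_Icc hab.le hcont.continuousOn ⟨ha.le, hb.le⟩
    refine ⟨x, ?_, fun x' hx' => ?_⟩
    · show (Rfun N ev β (↑x + ↑y * Complex.I)).im = 0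
      rw [hg]; exact hx
    · have hx'' : g x' = 0 := by rw [← hg]; exact hx'
      exact hmono.injective (hx''.trans hx.symm)
end

section
/- The steepest-descent curve lies to the left of γ. If 0 < y < π/(2β), x ∈ ℝ, x + iy ∉ (−∞, λ₁] and Im R(x + iy) = 0, then x < γ. Equivalently, h(y) < γ for all y ∈ (0, π/(2β)). -/
open Finset Complex Real

/-- **The steepest-descent curve lies to the left of `γ`.**
If `0 < y < π/(2β)`, `x ∈ ℝ`, `x + iy ∉ (−∞, λ₁]` and `Im R(x + iy) = 0`, then `x < γ`,
where `γ` is the unique point of `(λ₁, ∞)` with `(1/N) Σ_i 1/(γ − λ_i) = 2β`. -/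
theorem steepest_descent_curve_left_of_gamma
    (N : ℕ) (hN : 0 < N) (ev : Fin N → ℝ) (hev : Antitone ev) (β : ℝ) (hβ : 0 < β)
    (γ : ℝ) (hγ : γ ∈ Set.Ioi (ev ⟨0, hN⟩))
    (hγeq : (1 / N : ℝ) * ∑ i, 1 / (γ - ev i) = 2 * β)
    (x y : ℝ) (hy : y ∈ Set.Ioo 0 (π / (2 * β)))
    (hslit : ¬((x + y * Complex.I).im = 0 ∧ (x + y * Complex.I).re ≤ ev ⟨0, hN⟩))
    (hR : (Rfun N ev β (x + y * Complex.I)).im = 0) :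
    x < γ := by
  by_contra hcon
  push_neg at hcon
  set z : ℂ := x + y * Complex.I with hz
  obtain ⟨hy0, hy1⟩ := hy
  have hγ1 : ev ⟨0, hN⟩ < γ := hγ
  -- basic per-index facts
  have hevlt : ∀ i, ev i < γ := fun i =>
    lt_of_le_of_lt (hev (Fin.le_def.mpr (Nat.zero_le _))) hγ1
  have hre : ∀ i : Fin N, (z - (ev i : ℂ)).re = x - ev i := by
    intro i; simp [hz]
  have him : ∀ i : Fin N, (z - (ev i : ℂ)).im = y := by
    intro i; simp [hz]
  have hrepos : ∀ i : Fin N, 0 < (z - (ev i : ℂ)).re := by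
    intro i; rw [hre]; have := hevlt i; linarith
  -- the argument of each z - λ_i is positive and < y/(γ - λ_i)
  have key : ∀ i : Fin N, (Complex.log (z - (ev i : ℂ))).im < y / (γ - ev i) := by
    intro i
    rw [Complex.log_im]
    have hzne : z - (ev i : ℂ) ≠ 0 := by
      intro h; have := hrepos i; rw [h] at this; simp at this
    have habs : 0 < ‖z - (ev i : ℂ)‖ := by
      simpa using hzne
    have hargpos : 0 < Complex.arg (z - (ev i : ℂ)) := by
      rw [Complex.arg_of_re_nonneg (hrepos i).le]
      apply Real.arcsin_pos.2
      rw [him]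
      positivity
    have harglt : Complex.arg (z - (ev i : ℂ)) < π / 2 := by
      have := Complex.abs_arg_lt_pi_div_two_iff.2 (Or.inl (hrepos i))
      exact lt_of_le_of_lt (le_abs_self _) this
    have htan := Real.lt_tan hargpos harglt
    rw [Complex.tan_arg, hre i, him i] at htan
    refine lt_of_lt_of_le htan ?_
    apply div_le_div_of_nonneg_left hy0.le
    · have := hevlt i; linarith
    · linarith
  -- compute the imaginary part of Rfun
  have hNpos : (0 : ℝ) < (N : ℝ) := Nat.cast_pos.2 hN
  have hImR : (Rfun N ev β z).im
      = 2 * β * y - (1 / N : ℝ) * ∑ i, (Complex.log (z - (ev i : ℂ))).im := by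
    simp [Rfun, Complex.sub_im, Complex.mul_im, Complex.im_sum, hz, Finset.mul_sum]
  rw [hImR] at hR
  -- strict comparison of sums
  have hsumlt : ∑ i, (Complex.log (z - (ev i : ℂ))).im < ∑ i, y / (γ - ev i) := by
    apply Finset.sum_lt_sum_of_nonempty
    · exact Finset.univ_nonempty_iff.2 ⟨⟨0, hN⟩⟩
    · intro i _; exact key i
  have hsum : ∑ i, y / (γ - ev i) = y * ∑ i, 1 / (γ - ev i) := by
    rw [Finset.mul_sum]; congr 1; ext i; ring
  have h2β : (1 / N : ℝ) * ∑ i, y / (γ - ev i) = 2 * β * y := by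
    rw [hsum, ← mul_assoc, mul_comm (1 / N : ℝ) y, mul_assoc, hγeq]; ring
  have : (1 / N : ℝ) * ∑ i, (Complex.log (z - (ev i : ℂ))).im
      < (1 / N : ℝ) * ∑ i, y / (γ - ev i) := by
    apply mul_lt_mul_of_pos_left hsumlt
    positivity
  rw [h2β] at this
  linarith
end

section
/- Derivative formula and monotonicity of the height function. For each y ∈ (0, π/(2β)), h is differentiable at y and h′(y) = − [ 2β − (1/N) Σ_{i=1}^N (h(y) − λ_i)/((h(y) − λ_i)² + y²) ] / [ y · (1/N) Σ_{i=1}^N 1/((h(y) − λ_i)² + y²) ]. Moreover, if y ∈ [1/(4β), π/(2β)) then h′(y) ≤ 1/2 − 2βy. -/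
open Finset Complex Real

lemma my_arg_eq (u v : ℝ) (hv : 0 < v) :
    Complex.arg ((u : ℂ) + (v : ℂ) * Complex.I) = π / 2 - Real.arctan (u / v) := by
  set z : ℂ := (u : ℂ) + (v : ℂ) * Complex.I with hz
  have him : z.im = v := by simp [hz]
  have hre : z.re = u := by simp [hz]
  have h0 : 0 < z.arg := by
    rcases lt_or_eq_of_le (Complex.arg_nonneg_iff.2 (by rw [him]; exact hv.le)) with h | h
    · exact h
    · exfalso
      have := Complex.arg_eq_zero_iff.1 h.symm
      rw [him] at this; linarith [this.2]
  have h1 : z.arg < π := Complex.arg_lt_pi_iff.2 (Or.inr (by rw [him]; exact hv.ne'))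
  have key : Real.tan (π / 2 - z.arg) = u / v := by
    rw [Real.tan_pi_div_two_sub, Complex.tan_arg, hre, him, inv_div]
  have h2 := Real.arctan_tan (x := π / 2 - z.arg) (by linarith) (by linarith)
  rw [key] at h2
  linarith

lemma my_im_Rfun (N : ℕ) (hN : 0 < N) (ev : Fin N → ℝ) (β : ℝ) (x y : ℝ) (hy : 0 < y) :
    (2 * (β : ℂ) * ((x:ℂ) + (y:ℂ) * Complex.I) -
      (1 / N : ℂ) * ∑ i, Complex.log (((x:ℂ) + (y:ℂ) * Complex.I) - (ev i : ℂ))).im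
      = 2 * β * y - π / 2 + (1 / N : ℝ) * ∑ i, Real.arctan ((x - ev i) / y) := by
  have hz : ∀ i : Fin N, ((x:ℂ) + (y:ℂ) * Complex.I - (ev i : ℂ))
      = ((x - ev i : ℝ) : ℂ) + (y : ℝ) * Complex.I := by
    intro i; push_cast; ring
  have harg : ∀ i : Fin N,
      (Complex.log (((x:ℂ) + (y:ℂ) * Complex.I) - (ev i : ℂ))).im
        = π / 2 - Real.arctan ((x - ev i) / y) := by
    intro i
    rw [Complex.log_im, hz i, my_arg_eq _ _ hy]
  have hcast : (1 / N : ℂ) = ((1 / N : ℝ) : ℂ) := by push_cast; ring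
  rw [Complex.sub_im, hcast, Complex.im_ofReal_mul, Complex.im_sum]
  simp only [harg]
  rw [Finset.sum_sub_distrib, Finset.sum_const, Finset.card_univ, Fintype.card_fin]
  have hN' : (N : ℝ) ≠ 0 := Nat.cast_ne_zero.2 hN.ne'
  have him : (2 * (β : ℂ) * ((x:ℂ) + (y:ℂ) * Complex.I)).im = 2 * β * y := by
    simp [Complex.mul_im, Complex.add_im, Complex.add_re]
  rw [him]
  field_simp
  ring


lemma my_clm_eval (L : ℝ × ℝ →L[ℝ] ℝ) (v : ℝ × ℝ) :
    L v = v.1 * L (1, 0) + v.2 * L (0, 1) := by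
  have hv : v = v.1 • ((1:ℝ), (0:ℝ)) + v.2 • ((0:ℝ), (1:ℝ)) := by
    ext <;> simp
  nth_rewrite 1 [hv]
  rw [map_add, map_smul, map_smul]
  simp [smul_eq_mul]

lemma my_term_hasFDerivAt (lam x y : ℝ) (hy : 0 < y) :
    HasFDerivAt (fun p : ℝ × ℝ => Real.arctan ((p.1 - lam) / p.2))
      ((y / ((x - lam) ^ 2 + y ^ 2)) • ContinuousLinearMap.fst ℝ ℝ ℝ
        + (-((x - lam) / ((x - lam) ^ 2 + y ^ 2))) • ContinuousLinearMap.snd ℝ ℝ ℝ) (x, y) := by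
  have h1 : HasFDerivAt (fun p : ℝ × ℝ => p.1 - lam)
      (ContinuousLinearMap.fst ℝ ℝ ℝ) (x, y) := hasFDerivAt_fst.sub_const lam
  have h2 : HasFDerivAt (fun p : ℝ × ℝ => (p.2)⁻¹)
      ((-(y ^ 2)⁻¹) • ContinuousLinearMap.snd ℝ ℝ ℝ) (x, y) :=
    (hasDerivAt_inv hy.ne').comp_hasFDerivAt (x, y) hasFDerivAt_snd
  have h3 := h1.fun_mul h2
  have h4 := (Real.hasDerivAt_arctan ((x - lam) * y⁻¹)).comp_hasFDerivAt (x, y) h3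
  have heq : (fun p : ℝ × ℝ => Real.arctan ((p.1 - lam) / p.2))
      = (Real.arctan ∘ fun p : ℝ × ℝ => (p.1 - lam) * (p.2)⁻¹) := by
    funext p; simp [div_eq_mul_inv, Function.comp]
  rw [heq]
  refine HasFDerivAt.congr_fderiv h4 ?_
  have hd : (0:ℝ) < (x - lam) ^ 2 + y ^ 2 := by positivity
  refine ContinuousLinearMap.ext fun (v : ℝ × ℝ) => ?_
  simp only [ContinuousLinearMap.add_apply, ContinuousLinearMap.smul_apply,
      ContinuousLinearMap.coe_fst', ContinuousLinearMap.coe_snd', smul_eq_mul]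
  field_simp
  ring

lemma my_G_hasFDerivAt (N : ℕ) (ev : Fin N → ℝ) (β x y : ℝ) (hy : 0 < y) :
    ∃ L : ℝ × ℝ →L[ℝ] ℝ,
      HasFDerivAt (fun p : ℝ × ℝ =>
          2 * β * p.2 - π / 2 + (1 / N : ℝ) * ∑ i, Real.arctan ((p.1 - ev i) / p.2)) L (x, y)
      ∧ L (1, 0) = (1 / N : ℝ) * ∑ i, y / ((x - ev i) ^ 2 + y ^ 2)
      ∧ L (0, 1) = 2 * β - (1 / N : ℝ) * ∑ i, (x - ev i) / ((x - ev i) ^ 2 + y ^ 2) := by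
  have hsum : HasFDerivAt (fun p : ℝ × ℝ => ∑ i, Real.arctan ((p.1 - ev i) / p.2))
      (∑ i, ((y / ((x - ev i) ^ 2 + y ^ 2)) • ContinuousLinearMap.fst ℝ ℝ ℝ
        + (-((x - ev i) / ((x - ev i) ^ 2 + y ^ 2))) • ContinuousLinearMap.snd ℝ ℝ ℝ)) (x, y) :=
    HasFDerivAt.fun_sum (fun i _ => my_term_hasFDerivAt (ev i) x y hy)
  have hlin : HasFDerivAt (fun p : ℝ × ℝ => 2 * β * p.2 - π / 2)
      ((2 * β) • ContinuousLinearMap.snd ℝ ℝ ℝ) (x, y) :=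
    (hasFDerivAt_snd.const_mul (2 * β)).sub_const (π / 2)
  refine ⟨_, hlin.add (hsum.const_mul (1 / N : ℝ)), ?_, ?_⟩
  · simp [ContinuousLinearMap.sum_apply, Finset.mul_sum]
  · simp [ContinuousLinearMap.sum_apply, Finset.mul_sum]
    ring

set_option maxHeartbeats 1000000 in
lemma my_main_deriv (N : ℕ) (hN : 0 < N) (ev : Fin N → ℝ) (β : ℝ) (hβ : 0 < β)
    (h : ℝ → ℝ)
    (hG0 : ∀ y ∈ Set.Ioo (0:ℝ) (π / (2*β)),
       2*β*y - π/2 + (1/N : ℝ) * ∑ i, Real.arctan ((h y - ev i)/y) = 0)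
    (y₀ : ℝ) (hy₀ : y₀ ∈ Set.Ioo (0:ℝ) (π / (2*β))) :
    HasDerivAt h
      (-((2*β - (1/N : ℝ) * ∑ i, (h y₀ - ev i)/((h y₀ - ev i)^2 + y₀^2)) /
          (y₀ * ((1/N : ℝ) * ∑ i, 1/((h y₀ - ev i)^2 + y₀^2))))) y₀ := by
  obtain ⟨hy₀pos, hy₀lt⟩ := hy₀
  set G : ℝ × ℝ → ℝ :=
    fun p => 2*β*p.2 - π/2 + (1/N : ℝ) * ∑ i, Real.arctan ((p.1 - ev i)/p.2) with hGdef
  have hG0' : ∀ y ∈ Set.Ioo (0:ℝ) (π / (2*β)), G (h y, y) = 0 := fun y hy => hG0 y hy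
  set x₀ : ℝ := h y₀ with hx₀
  obtain ⟨L, hL, hL1, hL2⟩ := my_G_hasFDerivAt N ev β x₀ y₀ hy₀pos
  set a : ℝ := L (1, 0) with ha
  set b : ℝ := L (0, 1) with hb
  have hNpos : (0:ℝ) < (N:ℝ) := Nat.cast_pos.2 hN
  have hBpos : 0 < (1/N : ℝ) * ∑ i, 1/((x₀ - ev i)^2 + y₀^2) := by
    apply mul_pos (by positivity)
    exact Finset.sum_pos (fun i _ => by positivity) ⟨⟨0, hN⟩, Finset.mem_univ _⟩
  have ha_eq : a = y₀ * ((1/N : ℝ) * ∑ i, 1/((x₀ - ev i)^2 + y₀^2)) := by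
    rw [hL1]
    simp only [Finset.mul_sum]
    exact Finset.sum_congr rfl fun i _ => by ring
  have hapos : 0 < a := by rw [ha_eq]; exact mul_pos hy₀pos hBpos
  have hval : -((2*β - (1/N : ℝ) * ∑ i, (x₀ - ev i)/((x₀ - ev i)^2 + y₀^2)) /
          (y₀ * ((1/N : ℝ) * ∑ i, 1/((x₀ - ev i)^2 + y₀^2)))) = -(b/a) := by
    rw [← hL2, ← ha_eq]
  rw [hval]
  set d : ℝ := -(b/a) with hd
  -- the fderiv of G at (x₀, y₀) as a linear approx
  have hGx₀ : G (x₀, y₀) = 0 := hG0' y₀ ⟨hy₀pos, hy₀lt⟩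
  have hIoo : Set.Ioo (0:ℝ) (π/(2*β)) ∈ nhds y₀ := isOpen_Ioo.mem_nhds ⟨hy₀pos, hy₀lt⟩
  -- strict monotonicity of G in the first variable
  have hmono : ∀ y : ℝ, 0 < y → StrictMono (fun x => G (x, y)) := by
    intro y hy u v huv
    simp only [hGdef]
    apply add_lt_add_of_le_of_lt le_rfl
    apply mul_lt_mul_of_pos_left _ (by positivity : (0:ℝ) < 1/(N:ℝ))
    apply Finset.sum_lt_sum_of_nonempty ⟨⟨0, hN⟩, Finset.mem_univ _⟩
    intro i _
    exact Real.arctan_strictMono ((div_lt_div_iff_of_pos_right hy).2 (by linarith))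
  -- continuity of G in the second variable
  have hGcont : ∀ x : ℝ, ContinuousAt (fun y => G (x, y)) y₀ := by
    intro x
    obtain ⟨L', hL', -, -⟩ := my_G_hasFDerivAt N ev β x y₀ hy₀pos
    exact hL'.continuousAt.comp ((continuous_const.prodMk continuous_id).continuousAt)
  -- continuity of h at y₀
  have hcont : Filter.Tendsto h (nhds y₀) (nhds x₀) := by
    rw [Metric.tendsto_nhds]
    intro ε hε
    have h1 : 0 < G (x₀ + ε, y₀) := by
      have := hmono y₀ hy₀pos (show x₀ < x₀ + ε by linarith)
      simpa [hGx₀] using this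
    have h2 : G (x₀ - ε, y₀) < 0 := by
      have := hmono y₀ hy₀pos (show x₀ - ε < x₀ by linarith)
      simpa [hGx₀] using this
    have hev1 : ∀ᶠ y in nhds y₀, 0 < G (x₀ + ε, y) :=
      (hGcont (x₀ + ε)).eventually (eventually_gt_nhds h1)
    have hev2 : ∀ᶠ y in nhds y₀, G (x₀ - ε, y) < 0 :=
      (hGcont (x₀ - ε)).eventually (eventually_lt_nhds h2)
    filter_upwards [hev1, hev2, hIoo] with y hy1 hy2 hy3
    rw [Real.dist_eq, abs_lt]
    have hGy : G (h y, y) = 0 := hG0' y hy3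
    have hy0 : 0 < y := hy3.1
    constructor
    · by_contra hc
      push_neg at hc
      have h5 : G (h y, y) ≤ G (x₀ - ε, y) := (hmono y hy0).monotone (by linarith)
      rw [hGy] at h5
      linarith
    · by_contra hc
      push_neg at hc
      have h5 : G (x₀ + ε, y) ≤ G (h y, y) := (hmono y hy0).monotone (by linarith)
      rw [hGy] at h5
      linarith
  -- the key estimate
  have hEst : ∀ c : ℝ, 0 < c → ∀ᶠ y in nhds y₀,
      |a * (h y - x₀) + b * (y - y₀)| ≤ c * max |h y - x₀| |y - y₀| := by
    intro c hc
    have hk : Filter.Tendsto (fun y => ((h y, y) : ℝ × ℝ)) (nhds y₀) (nhds (x₀, y₀)) :=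
      hcont.prodMk_nhds Filter.tendsto_id
    have hlo := (hL.isLittleO.comp_tendsto hk).def hc
    filter_upwards [hlo, hIoo] with y hy1 hy2
    have hGy : G (h y, y) = 0 := hG0' y hy2
    have hkeq : ((h y, y) : ℝ × ℝ) - (x₀, y₀) = (h y - x₀, y - y₀) := rfl
    simp only [Function.comp, hkeq] at hy1
    calc |a * (h y - x₀) + b * (y - y₀)|
        = ‖G (h y, y) - G (x₀, y₀) - L (h y - x₀, y - y₀)‖ := by
          rw [hGy, hGx₀, my_clm_eval L (h y - x₀, y - y₀), Real.norm_eq_abs]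
          rw [show ((h y - x₀, y - y₀) : ℝ × ℝ).1 = h y - x₀ from rfl,
              show ((h y - x₀, y - y₀) : ℝ × ℝ).2 = y - y₀ from rfl]
          rw [show (0:ℝ) - 0 - ((h y - x₀) * a + (y - y₀) * b)
                = -(a * (h y - x₀) + b * (y - y₀)) from by ring, abs_neg]
      _ ≤ c * ‖((h y - x₀, y - y₀) : ℝ × ℝ)‖ := hy1
      _ = c * max |h y - x₀| |y - y₀| := by
          rw [Prod.norm_def]
          simp [Real.norm_eq_abs]
  -- Lipschitz-type bound
  set K : ℝ := (2*|b| + a)/a with hK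
  have hK1 : 1 ≤ K := by
    rw [hK, le_div_iff₀ hapos]
    have := abs_nonneg b
    linarith
  have hLip : ∀ᶠ y in nhds y₀, |h y - x₀| ≤ K * |y - y₀| := by
    filter_upwards [hEst (a/2) (by positivity)] with y hy1
    have habs : |a * (h y - x₀)| ≤ |a * (h y - x₀) + b * (y - y₀)| + |b * (y - y₀)| := by
      have := abs_add_le (a * (h y - x₀) + b * (y - y₀)) (-(b * (y - y₀)))
      simpa using this
    have hmax : max |h y - x₀| |y - y₀| ≤ |h y - x₀| + |y - y₀| :=
      max_le (by linarith [abs_nonneg (y - y₀)]) (by linarith [abs_nonneg (h y - x₀)])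
    have h1 : a * |h y - x₀| ≤ |b| * |y - y₀| + (a/2) * (|h y - x₀| + |y - y₀|) := by
      have e1 : |a * (h y - x₀)| = a * |h y - x₀| := by
        rw [abs_mul, abs_of_pos hapos]
      have e2 : |b * (y - y₀)| = |b| * |y - y₀| := abs_mul _ _
      have e3 : |a * (h y - x₀) + b * (y - y₀)| ≤ (a/2) * (|h y - x₀| + |y - y₀|) :=
        hy1.trans (mul_le_mul_of_nonneg_left hmax (by positivity))
      linarith only [habs, e1, e2, e3]
    have h3 : a/2 * |h y - x₀| ≤ a/2 * (K * |y - y₀|) := by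
      have hKa : a/2 * (K * |y - y₀|) = (|b| + a/2) * |y - y₀| := by
        rw [hK]; field_simp [hapos.ne']
      rw [hKa]; linarith only [h1]
    exact le_of_mul_le_mul_left h3 (by positivity)
  -- conclude
  rw [hasDerivAt_iff_isLittleO, Asymptotics.isLittleO_iff]
  intro c hc
  have hKpos : (0:ℝ) < K + 1 := by linarith
  have hc' : 0 < a * c / (K + 1) := by positivity
  filter_upwards [hEst (a * c / (K + 1)) hc', hLip] with y h1 h2
  have hmax : max |h y - x₀| |y - y₀| ≤ (K + 1) * |y - y₀| := by
    apply max_le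
    · calc |h y - x₀| ≤ K * |y - y₀| := h2
        _ ≤ (K + 1) * |y - y₀| := by nlinarith [abs_nonneg (y - y₀)]
    · nlinarith [abs_nonneg (y - y₀)]
  have h3 : |a * (h y - x₀) + b * (y - y₀)| ≤ (a * c / (K + 1)) * ((K + 1) * |y - y₀|) :=
    h1.trans (mul_le_mul_of_nonneg_left hmax hc'.le)
  have h4 : a * ((h y - x₀) - (y - y₀) * d) = a * (h y - x₀) + b * (y - y₀) := by
    rw [hd]; field_simp [hapos.ne']; ring
  have h5 : a * |(h y - x₀) - (y - y₀) * d| ≤ (a * c / (K + 1)) * ((K + 1) * |y - y₀|) := by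
    have e : a * |(h y - x₀) - (y - y₀) * d| = |a * ((h y - x₀) - (y - y₀) * d)| := by
      rw [abs_mul, abs_of_pos hapos]
    rw [e, h4]; exact h3
  have h6 : (a * c / (K + 1)) * ((K + 1) * |y - y₀|) = a * (c * |y - y₀|) := by
    field_simp
  rw [h6] at h5
  have h7 : |(h y - x₀) - (y - y₀) * d| ≤ c * |y - y₀| := le_of_mul_le_mul_left h5 hapos
  simpa [Real.norm_eq_abs, smul_eq_mul] using h7

/-- **Derivative formula and monotonicity of the height function.**
For `y ∈ (0, π/(2β))`, the steepest-descent height function `h` is differentiable at `y` with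
`h′(y) = −[2β − (1/N) Σ_i (h(y) − λ_i)/((h(y) − λ_i)² + y²)]
        /[y · (1/N) Σ_i 1/((h(y) − λ_i)² + y²)]`;
moreover, if `y ∈ [1/(4β), π/(2β))` then `h′(y) ≤ 1/2 − 2βy`. -/
theorem height_function_deriv_and_monotone
    (N : ℕ) (hN : 0 < N) (ev : Fin N → ℝ) (hev : Antitone ev) (β : ℝ) (hβ : 0 < β)
    (γ : ℝ) (hγ : γ ∈ Set.Ioi (ev ⟨0, hN⟩))
    (hγeq : (1 / N : ℝ) * ∑ i, 1 / (γ - ev i) = 2 * β)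
    (h : ℝ → ℝ) (h0 : h 0 = γ)
    (hhS : ∀ y : ℝ, 0 < |y| → |y| < π / (2 * β) →
      (Rfun N ev β (h y + y * Complex.I)).im = 0) :
    (∀ y ∈ Set.Ioo (0 : ℝ) (π / (2 * β)),
      HasDerivAt h
        (-((2 * β - (1 / N : ℝ) * ∑ i, (h y - ev i) / ((h y - ev i) ^ 2 + y ^ 2)) /
            (y * ((1 / N : ℝ) * ∑ i, 1 / ((h y - ev i) ^ 2 + y ^ 2))))) y) ∧
    (∀ y ∈ Set.Ico (1 / (4 * β)) (π / (2 * β)), deriv h y ≤ 1 / 2 - 2 * β * y) := by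
  have hG0 : ∀ y ∈ Set.Ioo (0:ℝ) (π / (2*β)),
      2*β*y - π/2 + (1/N : ℝ) * ∑ i, Real.arctan ((h y - ev i)/y) = 0 := by
    intro y hy
    have h1 := hhS y (by rw [abs_of_pos hy.1]; exact hy.1) (by rw [abs_of_pos hy.1]; exact hy.2)
    rw [Rfun] at h1
    rw [my_im_Rfun N hN ev β (h y) y hy.1] at h1
    exact h1
  have part1 : ∀ y ∈ Set.Ioo (0 : ℝ) (π / (2 * β)),
      HasDerivAt h
        (-((2 * β - (1 / N : ℝ) * ∑ i, (h y - ev i) / ((h y - ev i) ^ 2 + y ^ 2)) /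
            (y * ((1 / N : ℝ) * ∑ i, 1 / ((h y - ev i) ^ 2 + y ^ 2))))) y :=
    fun y hy => my_main_deriv N hN ev β hβ h hG0 y hy
  refine ⟨part1, ?_⟩
  intro y hy
  have hy' : y ∈ Set.Ioo (0:ℝ) (π / (2*β)) :=
    ⟨lt_of_lt_of_le (by positivity) hy.1, hy.2⟩
  have hy0 : 0 < y := hy'.1
  rw [(part1 y hy').deriv]
  have hN' : ((N:ℝ)) ≠ 0 := (Nat.cast_pos.2 hN).ne'
  have h4βy : 1 ≤ 4*β*y := by
    have h1 := hy.1
    rw [div_le_iff₀ (by positivity)] at h1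
    linarith
  have hdpos : ∀ i : Fin N, (0:ℝ) < (h y - ev i)^2 + y^2 := fun i => by positivity
  have hS2pos : 0 < ∑ i, 1/((h y - ev i)^2 + y^2) :=
    Finset.sum_pos (fun i _ => by positivity) ⟨⟨0, hN⟩, Finset.mem_univ _⟩
  have hden : 0 < y * ((1/N : ℝ) * ∑ i, 1/((h y - ev i)^2 + y^2)) :=
    mul_pos hy0 (mul_pos (by positivity) hS2pos)
  rw [show -((2*β - (1/N : ℝ) * ∑ i, (h y - ev i)/((h y - ev i)^2 + y^2)) /
        (y * ((1/N : ℝ) * ∑ i, 1/((h y - ev i)^2 + y^2))))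
      = ((1/N : ℝ) * ∑ i, (h y - ev i)/((h y - ev i)^2 + y^2) - 2*β) /
        (y * ((1/N : ℝ) * ∑ i, 1/((h y - ev i)^2 + y^2))) from by ring,
     div_le_iff₀ hden]
  have key1 : ∀ i : Fin N, (h y - ev i)/((h y - ev i)^2 + y^2)
      ≤ (2*β*(h y - ev i)^2 + y/2)/((h y - ev i)^2 + y^2) := by
    intro i
    gcongr
    nlinarith [sq_nonneg (4*β*(h y - ev i) - 1), h4βy, hβ]
  have hterm : ∀ i : Fin N, (2*β*(h y - ev i)^2 + y/2)/((h y - ev i)^2 + y^2)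
      = 2*β*(1 - y^2 * (1/((h y - ev i)^2 + y^2))) + (y/2) * (1/((h y - ev i)^2 + y^2)) := by
    intro i
    have := (hdpos i).ne'
    field_simp
    ring
  have key2 : ∑ i, (2*β*(h y - ev i)^2 + y/2)/((h y - ev i)^2 + y^2)
      = 2*β*((N:ℝ) - y^2 * ∑ i, 1/((h y - ev i)^2 + y^2))
        + (y/2) * ∑ i, 1/((h y - ev i)^2 + y^2) := by
    rw [Finset.sum_congr rfl (fun i _ => hterm i), Finset.sum_add_distrib,
        ← Finset.mul_sum, ← Finset.mul_sum, Finset.sum_sub_distrib,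
        Finset.sum_const, Finset.card_univ, Fintype.card_fin, ← Finset.mul_sum]
    simp
  have hsum1 : ∑ i, (h y - ev i)/((h y - ev i)^2+y^2)
      ≤ 2*β*((N:ℝ) - y^2 * ∑ i, 1/((h y - ev i)^2 + y^2))
        + (y/2) * ∑ i, 1/((h y - ev i)^2 + y^2) :=
    (Finset.sum_le_sum fun i _ => key1 i).trans_eq key2
  have hmul := mul_le_mul_of_nonneg_left hsum1 (show (0:ℝ) ≤ 1/(N:ℝ) by positivity)
  have hre : (1/(N:ℝ)) * (2*β*((N:ℝ) - y^2 * ∑ i, 1/((h y - ev i)^2 + y^2))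
        + (y/2) * ∑ i, 1/((h y - ev i)^2 + y^2))
      = 2*β + (1/2 - 2*β*y) * (y*((1/(N:ℝ)) * ∑ i, 1/((h y - ev i)^2 + y^2))) := by
    field_simp
    ring
  linarith [hmul, hre]
end
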